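/- arXiv:0802.1471 — 7 statements merged into one kernel-verified Lean document; each statement's English description precedes it below -/
import Mathlib

section
/- Let n, r be positive integers with r ≤ n, let A ⊆ {0,1}^n and B ⊆ {y ∈ {0,1}^n : |y| ≤ r}, and let R = A × B. Let μ be the uniform probability distribution on {0,1}^n × {y ∈ {0,1}^n : |y| ≤ r}. Then the discrepancy δ_μ(R) := |μ({(x,y) ∈ R : x·y = 1 mod 2}) − μ({(x,y) ∈ R : x·y = 0 mod 2})| satisfies δ_μ(R) ≤ √(|R|) / (√(2^n) · B(n,r)), where |R| = |A|·|B|. -/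
/-- Hamming weight of a bit string. -/
def wt {n : ℕ} (y : Fin n → Bool) : ℕ := (Finset.univ.filter (fun i => y i = true)).card

/-- Inner product mod 2 of two bit strings, as an element of `ZMod 2`. -/
def ip {n : ℕ} (x y : Fin n → Bool) : ZMod 2 := ∑ i, if x i && y i then 1 else 0

/-!
Writing `(-1)^(x·y)` for the ±1 matrix of the inner product, the numerator of the discrepancy
is `|∑_{x ∈ A, y ∈ B} (-1)^(x·y)|`. The columns of this `2^n × 2^n` matrix are pairwise
orthogonal of squared length `2^n`, so Cauchy–Schwarz over `x ∈ A` gives Lindsey's bound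
`√(|A|·|B|·2^n)`; dividing by `2^n·B(n,r)` yields the claim.
-/

open Finset

section Lindsey

variable {α β : Type*} [Fintype α] [DecidableEq β]

theorem sq_sum_sum_le_of_orthogonal (M : α → β → ℝ) (c : ℝ)
    (hM : ∀ y y', ∑ x, M x y * M x y' = if y = y' then c else 0) (A : Finset α) (B : Finset β) :
    (∑ x ∈ A, ∑ y ∈ B, M x y) ^ 2 ≤ (#A : ℝ) * (#B * c) := by
  have hnorm_sq : ∑ x, (∑ y ∈ B, M x y) ^ 2 = #B * c := by
    calc ∑ x, (∑ y ∈ B, M x y) ^ 2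
        = ∑ y ∈ B, ∑ y' ∈ B, ∑ x, M x y * M x y' := by
          simp_rw [sq, sum_mul_sum]
          rw [sum_comm]
          exact sum_congr rfl fun _ _ => sum_comm
      _ = #B * c := by simp [hM, sum_ite_eq]
  calc (∑ x ∈ A, ∑ y ∈ B, M x y) ^ 2
      ≤ #A * ∑ x ∈ A, (∑ y ∈ B, M x y) ^ 2 := sq_sum_le_card_mul_sum_sq
    _ ≤ #A * (#B * c) := by
      rw [← hnorm_sq]
      gcongr ?_ * ?_
      exact sum_le_sum_of_subset_of_nonneg (subset_univ A) fun x _ _ => sq_nonneg (∑ y ∈ B, M x y)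

theorem abs_sum_sum_le_of_orthogonal (M : α → β → ℝ) (c : ℝ)
    (hM : ∀ y y', ∑ x, M x y * M x y' = if y = y' then c else 0) (A : Finset α) (B : Finset β) :
    |∑ x ∈ A, ∑ y ∈ B, M x y| ≤ √((#A : ℝ) * #B) * √c := by
  rw [← Real.sqrt_mul (by positivity), mul_assoc]
  exact Real.abs_le_sqrt (sq_sum_sum_le_of_orthogonal M c hM A B)

end Lindsey

section Sign

variable {n : ℕ}

noncomputable def bitSign (b : Bool) : ℝ := if b then -1 else 1

/-- `(-1)^(x·y)`, written as a product over coordinates so that it factors. -/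
noncomputable def ipSign (x y : Fin n → Bool) : ℝ := ∏ i, bitSign (x i && y i)

theorem ipSign_eq (x y : Fin n → Bool) : ipSign x y = if ip x y = 0 then 1 else -1 := by
  have hprod : ipSign x y = (-1) ^ #{i | x i && y i} := by
    simp only [ipSign, bitSign, prod_ite, prod_const, one_pow, mul_one]
  have hip : ip x y = (#{i | x i && y i} : ℕ) := by
    rw [ip, sum_boole]
  simp only [hprod, hip, ZMod.natCast_eq_zero_iff_even, neg_one_pow_eq_ite]

theorem sum_bitSign_mul_bitSign (u v : Bool) :
    ∑ b, bitSign (b && u) * bitSign (b && v) = if u = v then 2 else 0 := by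
  cases u <;> cases v <;> norm_num [bitSign]

theorem sum_ipSign_mul_ipSign (y y' : Fin n → Bool) :
    ∑ x, ipSign x y * ipSign x y' = if y = y' then 2 ^ n else 0 := by
  simp_rw [ipSign, ← prod_mul_distrib]
  rw [← Fintype.prod_sum (fun i b => bitSign (b && y i) * bitSign (b && y' i))]
  simp_rw [sum_bitSign_mul_bitSign, prod_ite_zero, prod_const, card_univ, Fintype.card_fin]
  simp [funext_iff]

theorem sum_ipSign_eq_card_sub_card (s : Finset ((Fin n → Bool) × (Fin n → Bool))) :
    ∑ xy ∈ s, ipSign xy.1 xy.2 = #{xy ∈ s | ip xy.1 xy.2 = 0} - #{xy ∈ s | ip xy.1 xy.2 = 1} := by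
  have hsplit (z : ZMod 2) :
      (if z = 0 then (1 : ℝ) else -1) = (if z = 0 then 1 else 0) - (if z = 1 then 1 else 0) := by
    obtain rfl | rfl : z = 0 ∨ z = 1 := by revert z; decide
    all_goals simp [show (1 : ZMod 2) ≠ 0 by decide]
  simp_rw [ipSign_eq, hsplit, sum_sub_distrib, sum_boole]

end Sign

theorem discrepancy_rectangle_le_general (n r : ℕ)
    (A B : Finset (Fin n → Bool)) :
    |(((A ×ˢ B).filter (fun xy => ip xy.1 xy.2 = 1)).card : ℝ) /
        (2 ^ n * ∑ i ∈ Finset.range (r + 1), (n.choose i : ℝ)) -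
      (((A ×ˢ B).filter (fun xy => ip xy.1 xy.2 = 0)).card : ℝ) /
        (2 ^ n * ∑ i ∈ Finset.range (r + 1), (n.choose i : ℝ))| ≤
      Real.sqrt ((A.card : ℝ) * B.card) /
        (Real.sqrt (2 ^ n) * ∑ i ∈ Finset.range (r + 1), (n.choose i : ℝ)) := by
  set Q : ℝ := ∑ i ∈ range (r + 1), (n.choose i : ℝ)
  have hQ : 0 ≤ Q := sum_nonneg fun _ _ => Nat.cast_nonneg _
  have hLindsey := abs_sum_sum_le_of_orthogonal ipSign (2 ^ n) sum_ipSign_mul_ipSign A B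
  rw [← sum_product (f := fun xy => ipSign xy.1 xy.2), sum_ipSign_eq_card_sub_card,
    abs_sub_comm] at hLindsey
  have hden : 0 ≤ 2 ^ n * Q := mul_nonneg (by positivity) hQ
  rw [div_sub_div_same, abs_div, abs_of_nonneg hden]
  calc _ ≤ √((#A : ℝ) * #B) * √(2 ^ n) / (2 ^ n * Q) := div_le_div_of_nonneg_right hLindsey hden
    _ = √((#A : ℝ) * #B) / (√(2 ^ n) * Q) := by
      field_simp
      rw [Real.sq_sqrt (by positivity)]

/-- Discrepancy of a rectangle `R = A × B` (with `B` consisting of strings of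
Hamming weight at most `r`) under the uniform distribution `μ` on
`{0,1}^n × {y : |y| ≤ r}`:
`|μ(R ∩ IP⁻¹(1)) − μ(R ∩ IP⁻¹(0))| ≤ √|R| / (√(2^n)·B(n,r))`,
where `B(n,r) = Σ_{i=0}^r C(n,i)` and `|R| = |A|·|B|`. -/
theorem discrepancy_rectangle_le (n r : ℕ) (hn : 0 < n) (hr : 0 < r) (hrn : r ≤ n)
    (A B : Finset (Fin n → Bool)) (hB : ∀ y ∈ B, wt y ≤ r) :
    |(((A ×ˢ B).filter (fun xy => ip xy.1 xy.2 = 1)).card : ℝ) /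
        (2 ^ n * ∑ i ∈ Finset.range (r + 1), (n.choose i : ℝ)) -
      (((A ×ˢ B).filter (fun xy => ip xy.1 xy.2 = 0)).card : ℝ) /
        (2 ^ n * ∑ i ∈ Finset.range (r + 1), (n.choose i : ℝ))| ≤
      Real.sqrt ((A.card : ℝ) * B.card) /
        (Real.sqrt (2 ^ n) * ∑ i ∈ Finset.range (r + 1), (n.choose i : ℝ)) :=
  discrepancy_rectangle_le_general n r A B
end

section
/- Let n, r, p be positive integers with r ≤ n, and let 0 ≤ ε < 1/2. Every (p,ε)-data structure of length N for the inner product problem IP_{n,r} satisfies N ≥ (1/2) · 2^{(log₂ B(n,r) − 2 log₂(1/(1−2ε)) − 1)/p}. -/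
/-- The sequence of answers obtained by the (adaptive) decoder probing the string `y`
on query `q` with seed `s`: the `k`-th probe position may depend on the query, the seed,
and the previous `k` answers. -/
def runAns {N p : ℕ} {Q S : Type} (probe : (k : Fin p) → Q → S → (Fin k.val → Bool) → Fin N)
    (y : Fin N → Bool) (q : Q) (s : S) : (k : Fin p) → Bool
  | k => y (probe k q s (fun j => runAns probe y q s ⟨j.val, j.isLt.trans k.isLt⟩))
  termination_by k => k.val

/-- A `(p,δ,ε)`-error-correcting data structure of length `N` for `f : D → Q → A`:
an encoding `enc : D → {0,1}^N` together with a randomized decoder (seed set `Fin seeds`,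
adaptive probe-choice functions, and an output function) such that for every query `q`,
every data item `x`, and every `y ∈ {0,1}^N` within Hamming distance `δN` of `enc x`,
the decoder outputs `f x q` with probability at least `1 - ε` over a uniform seed. -/
structure ECDS (D Q A : Type) [DecidableEq A] (p N : ℕ) (δ ε : ℝ) (f : D → Q → A) where
  enc : D → (Fin N → Bool)
  seeds : ℕ
  seeds_pos : 0 < seeds
  probe : (k : Fin p) → Q → Fin seeds → (Fin k.val → Bool) → Fin N
  out : Q → Fin seeds → (Fin p → Bool) → A
  correct : ∀ (q : Q) (x : D) (y : Fin N → Bool),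
    (hammingDist y (enc x) : ℝ) ≤ δ * N →
    (1 - ε) * (seeds : ℝ) ≤
      ((Finset.univ.filter (fun s : Fin seeds =>
        out q s (runAns probe y q s) = f x q)).card : ℝ)

open Finset

namespace IPLowerBound

noncomputable def boolSign (b : Bool) : ℝ := if b then -1 else 1

lemma boolSign_mul_self (b : Bool) : boolSign b * boolSign b = 1 := by
  cases b <;> norm_num [boolSign]

lemma boolSign_not (b : Bool) : boolSign (!b) = -boolSign b := by
  cases b <;> simp [boolSign]

noncomputable def walsh {ι : Type*} (T : Finset ι) (y : ι → Bool) : ℝ := ∏ i ∈ T, boolSign (y i)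

/-- Unnormalised: `walshCoeff h T = 2 ^ |ι| * ĥ(T)`. -/
noncomputable def walshCoeff {ι : Type*} [Fintype ι] [DecidableEq ι] (h : (ι → Bool) → ℝ)
    (T : Finset ι) : ℝ :=
  ∑ y, h y * walsh T y

section Walsh

variable {ι : Type*}

lemma walsh_mul_self (T : Finset ι) (y : ι → Bool) : walsh T y * walsh T y = 1 := by
  simp only [walsh, ← prod_mul_distrib, boolSign_mul_self, prod_const_one]

lemma walsh_update_not [DecidableEq ι] {T : Finset ι} {i : ι} (hi : i ∈ T) (y : ι → Bool) :
    walsh T (Function.update y i (!y i)) = -walsh T y := by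
  have hrest : ∀ j ∈ T.erase i, boolSign (Function.update y i (!y i) j) = boolSign (y j) :=
    fun j hj => by rw [Function.update_of_ne (ne_of_mem_erase hj)]
  rw [walsh, walsh, ← mul_prod_erase _ _ hi, ← mul_prod_erase _ _ hi, prod_congr rfl hrest,
    Function.update_self, boolSign_not, neg_mul]

lemma sum_walsh_eq_zero_of_update_mem [DecidableEq ι] {T : Finset ι} {i : ι} (hi : i ∈ T)
    {A : Finset (ι → Bool)} (hA : ∀ y ∈ A, Function.update y i (!y i) ∈ A) :
    ∑ y ∈ A, walsh T y = 0 := by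
  have hflip : ∑ y ∈ A, walsh T (Function.update y i (!y i)) = ∑ y ∈ A, walsh T y :=
    sum_nbij' (fun y => Function.update y i (!y i)) (fun y => Function.update y i (!y i)) hA hA
      (fun y _ => by simp) (fun y _ => by simp) (fun _ _ => rfl)
  simp only [walsh_update_not hi, sum_neg_distrib] at hflip
  linarith

variable [Fintype ι]

lemma sum_walsh_mul_walsh (y z : ι → Bool) :
    ∑ T, walsh T y * walsh T z = if y = z then 2 ^ Fintype.card ι else 0 := by
  have hfactor : ∀ i, 1 + boolSign (y i) * boolSign (z i) = if y i = z i then 2 else 0 := by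
    intro i; cases y i <;> cases z i <;> norm_num [boolSign]
  simp only [walsh, ← prod_mul_distrib, ← powerset_univ, ← prod_one_add, hfactor,
    Fintype.prod_ite_zero, funext_iff, prod_const, card_univ]

variable [DecidableEq ι]

lemma sum_walshCoeff_mul_walsh (h : (ι → Bool) → ℝ) (z : ι → Bool) :
    ∑ T, walshCoeff h T * walsh T z = 2 ^ Fintype.card ι * h z := by
  simp only [walshCoeff, sum_mul, mul_assoc]
  rw [sum_comm]
  simp only [← mul_sum, sum_walsh_mul_walsh, mul_ite, mul_zero, sum_ite_eq, mem_univ, if_true,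
    mul_comm]

lemma sum_walshCoeff_sq (h : (ι → Bool) → ℝ) :
    ∑ T, walshCoeff h T ^ 2 = 2 ^ Fintype.card ι * ∑ y, h y ^ 2 :=
  calc ∑ T, walshCoeff h T ^ 2 = ∑ T, ∑ y, h y * (walshCoeff h T * walsh T y) := by
        refine sum_congr rfl fun T _ => ?_
        rw [sq]; nth_rewrite 1 [walshCoeff]; rw [sum_mul]
        exact sum_congr rfl fun y _ => by ring
    _ = ∑ y, h y * ∑ T, walshCoeff h T * walsh T y := by rw [sum_comm]; simp only [mul_sum]
    _ = 2 ^ Fintype.card ι * ∑ y, h y ^ 2 := by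
        simp only [sum_walshCoeff_mul_walsh, mul_sum]
        exact sum_congr rfl fun y _ => by ring

lemma sum_walshCoeff_sq_le {Q : Type*} [Fintype Q] {S : Q → Finset ι} (hS : Function.Injective S)
    (h : (ι → Bool) → ℝ) :
    ∑ q, walshCoeff h (S q) ^ 2 ≤ 2 ^ Fintype.card ι * ∑ y, h y ^ 2 := by
  calc ∑ q, walshCoeff h (S q) ^ 2 = ∑ T ∈ univ.map ⟨S, hS⟩, walshCoeff h T ^ 2 :=
        by rw [sum_map]; rfl
    _ ≤ ∑ T, walshCoeff h T ^ 2 := sum_le_univ_sum_of_nonneg fun _ => sq_nonneg _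
    _ = _ := sum_walshCoeff_sq h

end Walsh

section DecisionTree

variable {N p : ℕ} {Q S : Type}
  (probe : (k : Fin p) → Q → S → (Fin k.val → Bool) → Fin N) (q : Q) (s : S)

def probeAlong (a : Fin p → Bool) (k : Fin p) : Fin N :=
  probe k q s (fun j => a ⟨j.val, j.isLt.trans k.isLt⟩)

lemma runAns_eq_iff (y : Fin N → Bool) (a : Fin p → Bool) :
    runAns probe y q s = a ↔ ∀ k, y (probeAlong probe q s a k) = a k := by
  constructor
  · rintro rfl k
    rw [runAns]
    rfl
  · intro hy
    funext ⟨m, hm⟩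
    induction m using Nat.strong_induction_on with
    | _ m ih =>
      rw [runAns]
      convert hy ⟨m, hm⟩ using 2
      exact congrArg _ (funext fun j => ih j.val j.isLt _)

lemma runAns_update_eq (y : Fin N → Bool) {i : Fin N}
    (hi : ∀ k, probeAlong probe q s (runAns probe y q s) k ≠ i) (b : Bool) :
    runAns probe (Function.update y i b) q s = runAns probe y q s := by
  rw [runAns_eq_iff]
  intro k
  rw [Function.update_of_ne (hi k), (runAns_eq_iff probe q s y _).mp rfl k]

/-- A function of the answers of `p` adaptive probes has Fourier degree at most `p`: on each
set of inputs producing the same answers, some coordinate of `T` is never probed, and flipping it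
negates `walsh T`. -/
lemma walshCoeff_runAns_eq_zero (F : (Fin p → Bool) → ℝ) {T : Finset (Fin N)} (hT : p < #T) :
    walshCoeff (fun y => F (runAns probe y q s)) T = 0 := by
  rw [walshCoeff, ← sum_fiberwise_of_maps_to (t := univ) (g := fun y => runAns probe y q s)
    (fun _ _ => mem_univ _)]
  refine sum_eq_zero fun a _ => ?_
  obtain ⟨i, hiT, hi⟩ : ∃ i ∈ T, ∀ k, probeAlong probe q s a k ≠ i := by
    by_contra! h
    have hsub : T ⊆ univ.image (probeAlong probe q s a) := fun i hi =>
      mem_image.mpr ((h i hi).imp fun k hk => ⟨mem_univ k, hk⟩)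
    have := (card_le_card hsub).trans card_image_le
    simp only [card_univ, Fintype.card_fin] at this
    omega
  have hfiber : ∀ y ∈ univ.filter (fun y => runAns probe y q s = a),
      Function.update y i (!y i) ∈ univ.filter (fun y => runAns probe y q s = a) := by
    intro y hy
    rw [mem_filter] at hy ⊢
    exact ⟨mem_univ _, (runAns_update_eq probe q s y (hy.2 ▸ hi) _).trans hy.2⟩
  rw [sum_congr rfl fun y hy => by rw [(mem_filter.mp hy).2], ← mul_sum,
    sum_walsh_eq_zero_of_update_mem hiT hfiber, mul_zero]

end DecisionTree

noncomputable def zmodSign (a : ZMod 2) : ℝ := if a = 1 then -1 else 1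

lemma zmod_two_eq_zero_or_one (a : ZMod 2) : a = 0 ∨ a = 1 := by
  revert a; decide

lemma zmodSign_mul_zmodSign (a b : ZMod 2) :
    zmodSign a * zmodSign b = if a = b then 1 else -1 := by
  rcases zmod_two_eq_zero_or_one a with rfl | rfl <;>
    rcases zmod_two_eq_zero_or_one b with rfl | rfl <;> simp +decide [zmodSign]

lemma zmodSign_add (a b : ZMod 2) : zmodSign (a + b) = zmodSign a * zmodSign b := by
  rcases zmod_two_eq_zero_or_one a with rfl | rfl <;>
    rcases zmod_two_eq_zero_or_one b with rfl | rfl <;> simp +decide [zmodSign]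

lemma zmodSign_sq (a : ZMod 2) : zmodSign a ^ 2 = 1 := by
  rw [sq, zmodSign_mul_zmodSign, if_pos rfl]

lemma zmodSign_sum {ι : Type*} (s : Finset ι) (f : ι → ZMod 2) :
    zmodSign (∑ i ∈ s, f i) = ∏ i ∈ s, zmodSign (f i) := by
  classical
  induction s using Finset.induction_on with
  | empty => simp [zmodSign]
  | insert j s hj ih =>
    rw [sum_insert hj, prod_insert hj, zmodSign_add, ih]

def boolSupport {ι : Type*} [Fintype ι] (y : ι → Bool) : Finset ι := univ.filter fun i => y i = true

lemma boolSupport_injective {ι : Type*} [Fintype ι] :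
    Function.Injective (boolSupport : (ι → Bool) → Finset ι) := by
  intro y z h
  funext i
  have := Finset.ext_iff.mp h i
  simp only [boolSupport, mem_filter, mem_univ, true_and] at this
  exact Bool.eq_iff_iff.mpr this

lemma zmodSign_ip {n : ℕ} (x q : Fin n → Bool) : zmodSign (ip x q) = walsh (boolSupport q) x := by
  rw [ip, zmodSign_sum, walsh, boolSupport, prod_filter]
  refine prod_congr rfl fun i _ => ?_
  cases x i <;> cases q i <;> simp [zmodSign, boolSign]

/-- Each input is decoded correctly on a `1 - ε` fraction of seeds, so the seed-averaged
correlation is at least `1 - 2ε`; some seed attains the average. -/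
lemma exists_seed_correlation_ge {D Q : Type} [Fintype D] {p N : ℕ} {ε : ℝ}
    {f : D → Q → ZMod 2} (ds : ECDS D Q (ZMod 2) p N 0 ε f) (q : Q) :
    ∃ s, (1 - 2 * ε) * Fintype.card D ≤
      ∑ x, zmodSign (ds.out q s (runAns ds.probe (ds.enc x) q s)) * zmodSign (f x q) := by
  have hx : ∀ x, (1 - 2 * ε) * ds.seeds ≤
      ∑ s, zmodSign (ds.out q s (runAns ds.probe (ds.enc x) q s)) * zmodSign (f x q) := by
    intro x
    have hcorrect := ds.correct q x (ds.enc x) (by simp)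
    have hsplit := card_filter_add_card_filter_not (s := univ)
      (fun s : Fin ds.seeds => ds.out q s (runAns ds.probe (ds.enc x) q s) = f x q)
    rw [card_univ, Fintype.card_fin] at hsplit
    simp only [zmodSign_mul_zmodSign, sum_ite, sum_const, nsmul_eq_mul, mul_one, mul_neg]
    have hsplit' := congrArg (Nat.cast : ℕ → ℝ) hsplit
    push_cast at hsplit'
    linarith
  have htotal : ∑ _s : Fin ds.seeds, (1 - 2 * ε) * (Fintype.card D : ℝ) ≤
      ∑ s, ∑ x, zmodSign (ds.out q s (runAns ds.probe (ds.enc x) q s)) * zmodSign (f x q) := by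
    rw [sum_comm]
    calc ∑ _s : Fin ds.seeds, (1 - 2 * ε) * (Fintype.card D : ℝ)
        = ∑ _x : D, (1 - 2 * ε) * (ds.seeds : ℝ) := by
          simp only [sum_const, card_univ, Fintype.card_fin, nsmul_eq_mul]
          ring
      _ ≤ _ := sum_le_sum fun x _ => hx x
  obtain ⟨s, -, hs⟩ := exists_le_of_sum_le (univ_nonempty_iff.mpr ⟨⟨0, ds.seeds_pos⟩⟩) htotal
  exact ⟨s, hs⟩

/-- Fourier-expand `g`, then Cauchy–Schwarz over `S` and Parseval. -/
lemma two_pow_mul_sq_sum_le {ι D : Type*} [Fintype ι] [DecidableEq ι] [Fintype D]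
    (g : (ι → Bool) → ℝ) {S : Finset (Finset ι)} (hg : ∀ T ∉ S, walshCoeff g T = 0)
    (enc : D → ι → Bool) (ψ : D → ℝ) :
    2 ^ Fintype.card ι * (∑ x, g (enc x) * ψ x) ^ 2 ≤
      (∑ y, g y ^ 2) * ∑ T ∈ S, (∑ x, walsh T (enc x) * ψ x) ^ 2 := by
  set M : Finset ι → ℝ := fun T => ∑ x, walsh T (enc x) * ψ x
  have hexpand : 2 ^ Fintype.card ι * ∑ x, g (enc x) * ψ x = ∑ T ∈ S, walshCoeff g T * M T :=
    calc 2 ^ Fintype.card ι * ∑ x, g (enc x) * ψ x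
        = ∑ x, (∑ T, walshCoeff g T * walsh T (enc x)) * ψ x := by
          simp only [sum_walshCoeff_mul_walsh, mul_sum, mul_assoc]
      _ = ∑ T, walshCoeff g T * M T := by
          simp only [M, sum_mul, mul_sum, mul_assoc]
          exact sum_comm
      _ = ∑ T ∈ S, walshCoeff g T * M T :=
          (sum_subset (subset_univ S) fun T _ hT => by rw [hg T hT, zero_mul]).symm
  have hpos : (0 : ℝ) < 2 ^ Fintype.card ι := by positivity
  refine le_of_mul_le_mul_left ?_ hpos
  calc 2 ^ Fintype.card ι * (2 ^ Fintype.card ι * (∑ x, g (enc x) * ψ x) ^ 2)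
      = (∑ T ∈ S, walshCoeff g T * M T) ^ 2 := by rw [← hexpand]; ring
    _ ≤ (∑ T ∈ S, walshCoeff g T ^ 2) * ∑ T ∈ S, M T ^ 2 := sum_mul_sq_le_sq_mul_sq _ _ _
    _ ≤ (∑ T, walshCoeff g T ^ 2) * ∑ T ∈ S, M T ^ 2 :=
        mul_le_mul_of_nonneg_right (sum_le_univ_sum_of_nonneg fun _ => sq_nonneg _)
          (sum_nonneg fun _ _ => sq_nonneg _)
    _ = 2 ^ Fintype.card ι * ((∑ y, g y ^ 2) * ∑ T ∈ S, M T ^ 2) := by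
        rw [sum_walshCoeff_sq]; ring

theorem card_mul_sq_le_card_finset_card_le {n p N : ℕ} {P : (Fin n → Bool) → Prop}
    [DecidablePred P] {ε : ℝ} (hε : ε ≤ 1 / 2)
    (ds : ECDS (Fin n → Bool) {y // P y} (ZMod 2) p N 0 ε (fun x q => ip x q.val)) :
    Fintype.card {y // P y} * (1 - 2 * ε) ^ 2 ≤ #{T : Finset (Fin N) | #T ≤ p} := by
  set S : Finset (Finset (Fin N)) := {T | #T ≤ p}
  set M : Finset (Fin N) → {y // P y} → ℝ :=
    fun T q => walshCoeff (fun x => walsh T (ds.enc x)) (boolSupport q.val)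
  have hquery : ∀ q, ((1 - 2 * ε) * 2 ^ n) ^ 2 ≤ ∑ T ∈ S, M T q ^ 2 := by
    intro q
    obtain ⟨s, hs⟩ := exists_seed_correlation_ge ds q
    simp only [zmodSign_ip, Fintype.card_fun, Fintype.card_bool, Fintype.card_fin,
      Nat.cast_pow, Nat.cast_ofNat] at hs
    set g : (Fin N → Bool) → ℝ := fun y => zmodSign (ds.out q s (runAns ds.probe y q s))
    have hg : ∀ T ∉ S, walshCoeff g T = 0 := fun T hT =>
      walshCoeff_runAns_eq_zero ds.probe q s (fun a => zmodSign (ds.out q s a))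
        (by simpa [S] using hT)
    have hcorr := two_pow_mul_sq_sum_le g hg ds.enc (walsh (boolSupport q.val))
    simp only [g, zmodSign_sq, sum_const, card_univ, Fintype.card_fun, Fintype.card_bool,
      Fintype.card_fin, nsmul_eq_mul, mul_one, Nat.cast_pow, Nat.cast_ofNat] at hcorr
    have hsq := pow_le_pow_left₀ (mul_nonneg (by linarith) (by positivity)) hs 2
    exact hsq.trans (le_of_mul_le_mul_left hcorr (by positivity))
  have hcode : ∀ T, ∑ q, M T q ^ 2 ≤ 2 ^ n * 2 ^ n := fun T =>
    calc ∑ q, M T q ^ 2 ≤ 2 ^ Fintype.card (Fin n) * ∑ x, walsh T (ds.enc x) ^ 2 :=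
          sum_walshCoeff_sq_le (S := fun q : {y // P y} => boolSupport q.val)
            (fun _ _ h => Subtype.ext (boolSupport_injective h)) _
      _ = 2 ^ n * 2 ^ n := by simp [sq, walsh_mul_self]
  have hpos : (0 : ℝ) < 2 ^ n * 2 ^ n := by positivity
  refine le_of_mul_le_mul_right ?_ hpos
  calc Fintype.card {y // P y} * (1 - 2 * ε) ^ 2 * (2 ^ n * 2 ^ n)
      = ∑ q : {y // P y}, ((1 - 2 * ε) * 2 ^ n) ^ 2 := by
        rw [sum_const, card_univ, nsmul_eq_mul]; ring
    _ ≤ ∑ q, ∑ T ∈ S, M T q ^ 2 := sum_le_sum fun q _ => hquery q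
    _ = ∑ T ∈ S, ∑ q, M T q ^ 2 := sum_comm
    _ ≤ ∑ T ∈ S, (2 ^ n * 2 ^ n : ℝ) := sum_le_sum fun T _ => hcode T
    _ = #S * (2 ^ n * 2 ^ n) := by rw [sum_const, nsmul_eq_mul]

lemma card_finset_card_le (α : Type*) [Fintype α] (r : ℕ) :
    #{T : Finset α | #T ≤ r} = ∑ i ∈ range (r + 1), (Fintype.card α).choose i := by
  rw [card_eq_sum_card_fiberwise (f := card) (t := range (r + 1))
    fun T hT => mem_range.mpr (Nat.lt_succ_of_le (mem_filter.mp hT).2)]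
  refine sum_congr rfl fun i hi => ?_
  rw [← card_univ, ← card_powersetCard, powersetCard_eq_filter, powerset_univ, filter_filter]
  congr 1
  ext T
  simp only [mem_filter, mem_univ, true_and]
  exact ⟨fun h => h.2, fun h => ⟨h ▸ Nat.lt_succ_iff.mp (mem_range.mp hi), h⟩⟩

lemma card_wt_le_eq (n r : ℕ) :
    Fintype.card {y : Fin n → Bool // wt y ≤ r} = #{T : Finset (Fin n) | #T ≤ r} := by
  rw [Fintype.card_subtype]
  refine card_nbij boolSupport (fun y hy => by simpa [wt, boolSupport] using (mem_filter.mp hy).2)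
    boolSupport_injective.injOn fun T hT => ⟨fun i => decide (i ∈ T), ?_, ?_⟩
  · exact mem_filter.mpr ⟨mem_univ _, by simpa [wt] using (mem_filter.mp hT).2⟩
  · ext i; simp [boolSupport]

lemma sum_range_choose_le_two_mul_pow {N : ℕ} (hN : 1 ≤ N) (p : ℕ) :
    ∑ i ∈ range (p + 1), N.choose i ≤ (2 * N) ^ p :=
  calc ∑ i ∈ range (p + 1), N.choose i ≤ ∑ i ∈ range (p + 1), N ^ p :=
        sum_le_sum fun i hi => (Nat.choose_le_pow N i).trans
          (Nat.pow_le_pow_right hN (Nat.lt_succ_iff.mp (mem_range.mp hi)))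
    _ = (p + 1) * N ^ p := by rw [sum_const, card_range, smul_eq_mul]
    _ ≤ 2 ^ p * N ^ p := Nat.mul_le_mul_right _ Nat.lt_two_pow_self
    _ = (2 * N) ^ p := (mul_pow 2 N p).symm

lemma half_mul_two_rpow_le {B t x : ℝ} {p : ℕ} (hp : 0 < p) (hB : 0 < B) (ht : 0 < t)
    (hx : 0 < x) (h : B * t ^ 2 ≤ (2 * x) ^ p) :
    1 / 2 * 2 ^ ((Real.logb 2 B - 2 * Real.logb 2 (1 / t) - 1) / p) ≤ x := by
  have hlog : Real.logb 2 B - 2 * Real.logb 2 (1 / t) ≤ p * Real.logb 2 (2 * x) := by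
    calc Real.logb 2 B - 2 * Real.logb 2 (1 / t) = Real.logb 2 (B * t ^ 2) := by
          rw [Real.logb_mul hB.ne' (by positivity), Real.logb_pow, one_div, Real.logb_inv]
          ring
      _ ≤ Real.logb 2 ((2 * x) ^ p) := Real.logb_le_logb_of_le one_lt_two (by positivity) h
      _ = p * Real.logb 2 (2 * x) := Real.logb_pow 2 _ p
  have hexp : (Real.logb 2 B - 2 * Real.logb 2 (1 / t) - 1) / p ≤ Real.logb 2 (2 * x) := by
    rw [div_le_iff₀ (by exact_mod_cast hp)]
    linarith
  have := (Real.rpow_le_rpow_left_iff one_lt_two).mpr hexp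
  rw [Real.rpow_logb two_pos (by norm_num) (by positivity)] at this
  linarith

end IPLowerBound

open IPLowerBound in
theorem ip_data_structure_length_lower_bound_general (n r p N : ℕ)
    (hp : 0 < p)
    (ε : ℝ) (hε : ε < 1 / 2)
    (ds : ECDS (Fin n → Bool) {y : Fin n → Bool // wt y ≤ r} (ZMod 2) p N 0 ε
      (fun x q => ip x q.val)) :
    (1 / 2 : ℝ) * 2 ^ ((Real.logb 2 (∑ i ∈ Finset.range (r + 1), (n.choose i : ℝ)) -
        2 * Real.logb 2 (1 / (1 - 2 * ε)) - 1) / (p : ℝ)) ≤ (N : ℝ) := by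
  have hN : 0 < N := (ds.probe ⟨0, hp⟩ ⟨fun _ => false, by simp [wt]⟩ ⟨0, ds.seeds_pos⟩
    Fin.elim0).pos
  have hB : (0 : ℝ) < ∑ i ∈ Finset.range (r + 1), (n.choose i : ℝ) :=
    sum_pos' (fun _ _ => by positivity) ⟨0, by simp⟩
  have hcount := card_mul_sq_le_card_finset_card_le hε.le ds
  rw [card_wt_le_eq, card_finset_card_le, card_finset_card_le] at hcount
  refine half_mul_two_rpow_le hp hB (by linarith) (by exact_mod_cast hN) ?_
  calc (∑ i ∈ Finset.range (r + 1), (n.choose i : ℝ)) * (1 - 2 * ε) ^ 2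
      ≤ ∑ i ∈ Finset.range (p + 1), (N.choose i : ℝ) := by simpa using hcount
    _ ≤ (2 * N) ^ p := by exact_mod_cast sum_range_choose_le_two_mul_pow hN p

/-- Every `(p,ε)`-data structure (i.e. a `(p,0,ε)`-error-correcting data
structure) of length `N` for the inner product problem `IP_{n,r}` satisfies
`N ≥ (1/2)·2^{(log₂ B(n,r) − 2·log₂(1/(1−2ε)) − 1)/p}`. -/
theorem ip_data_structure_length_lower_bound (n r p N : ℕ)
    (hn : 0 < n) (hr : 0 < r) (hp : 0 < p) (hrn : r ≤ n)
    (ε : ℝ) (hε0 : 0 ≤ ε) (hε : ε < 1 / 2)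
    (ds : ECDS (Fin n → Bool) {y : Fin n → Bool // wt y ≤ r} (ZMod 2) p N 0 ε
      (fun x q => ip x q.val)) :
    (1 / 2 : ℝ) * 2 ^ ((Real.logb 2 (∑ i ∈ Finset.range (r + 1), (n.choose i : ℝ)) -
        2 * Real.logb 2 (1 / (1 - 2 * ε)) - 1) / (p : ℝ)) ≤ (N : ℝ) :=
  ip_data_structure_length_lower_bound_general n r p N hp ε hε ds
end

section
/- Let n, r, p be positive integers with r ≤ n. There exists a (p, 0)-data structure (i.e., noiseless, with error probability ε = 0) for the inner product problem IP_{n,r} of length N = B(n, ⌈r/p⌉): the encoding lists the bit x·z mod 2 for every z ∈ {0,1}^n of Hamming weight at most ⌈r/p⌉, and every query y with |y| ≤ r can be answered exactly by p probes. -/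
/-!
Since `r ≤ p ⌈r/p⌉`, the support of a query `y` splits into `p` pieces of size at most
`⌈r/p⌉`, and by linearity `x·y` is the sum mod 2 of the inner products of `x` with the
indicators of the pieces. The encoding stores `x·z` for every `z` of weight at most `⌈r/p⌉`
(indexed by its support), so `p` non-adaptive probes determine `x·y` exactly.
-/

open Finset

theorem Finset.exists_split_of_card_le_mul {α M : Type*} [DecidableEq α] [AddCommMonoid M] :
    ∀ {p t : ℕ} (s : Finset α), #s ≤ p * t →
      ∃ u : Fin p → Finset α, (∀ k, #(u k) ≤ t) ∧ ∀ f : α → M, ∑ i ∈ s, f i = ∑ k, ∑ i ∈ u k, f i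
  | 0, _, s, hs =>
    ⟨Fin.elim0, fun k => k.elim0, fun f => by simp [card_eq_zero.1 (by simpa using hs)]⟩
  | p + 1, t, s, hs => by
    obtain ⟨v, hvs, hv⟩ := exists_subset_card_eq (min_le_right t #s)
    obtain ⟨u, hu, hsum⟩ := exists_split_of_card_le_mul (M := M) (p := p) (t := t) (s \ v) (by
      rw [card_sdiff_of_subset hvs, hv]; rw [Nat.add_one_mul] at hs; omega)
    refine ⟨Fin.cons v u, Fin.cons (hv ▸ min_le_left t #s) hu, fun f => ?_⟩
    rw [Fin.sum_univ_succ, Fin.cons_zero, ← sum_sdiff hvs, hsum, add_comm]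
    simp only [Fin.cons_succ]

theorem Fintype.card_finset_card_le (α : Type*) [Fintype α] (t : ℕ) :
    Fintype.card {s : Finset α // #s ≤ t} = ∑ i ∈ range (t + 1), (Fintype.card α).choose i := by
  classical
  rw [Fintype.card_subtype, card_eq_sum_card_fiberwise (f := Finset.card) (t := range (t + 1))]
  · refine Finset.sum_congr rfl ?_
    intro i hi
    have hit : i ≤ t := Nat.lt_succ_iff.1 (mem_range.1 hi)
    rw [filter_filter, ← card_univ, ← card_powersetCard, powersetCard_eq_filter]
    congr 1
    ext s
    simp only [mem_filter, mem_univ, mem_powerset, subset_univ, true_and, and_iff_right_iff_imp]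
    exact fun hs => hs ▸ hit
  · intro s hs
    simpa [Nat.lt_succ_iff] using hs

theorem ip_eq_sum_support {n : ℕ} (x y : Fin n → Bool) :
    ip x y = ∑ i ∈ {i | y i = true}, if x i then 1 else 0 := by
  rw [ip, sum_filter]
  exact sum_congr rfl fun i _ => by cases x i <;> cases y i <;> rfl

theorem runAns_nonadaptive {N p : ℕ} {Q S : Type} (pos : Q → Fin p → Fin N)
    (y : Fin N → Bool) (q : Q) (s : S) :
    runAns (fun k q _ _ => pos q k) y q s = fun k => y (pos q k) := by
  funext k
  rw [runAns]

def ECDS.ofExact {D Q A : Type} [DecidableEq A] {p N : ℕ} {δ ε : ℝ} {f : D → Q → A}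
    (enc : D → Fin N → Bool) (pos : Q → Fin p → Fin N) (out : Q → (Fin p → Bool) → A)
    (hout : ∀ x q, out q (fun k => enc x (pos q k)) = f x q) (hδ : δ * N < 1) (hε : 0 ≤ ε) :
    ECDS D Q A p N δ ε f where
  enc := enc
  seeds := 1
  seeds_pos := one_pos
  probe k q _ _ := pos q k
  out q _ := out q
  correct q x y hy := by
    have hyx : y = enc x := hammingDist_eq_zero.1 (by
      have : (hammingDist y (enc x) : ℝ) < 1 := hy.trans_lt hδ
      exact_mod_cast Nat.lt_one_iff.1 (by exact_mod_cast this))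
    subst hyx
    simp [runAns_nonadaptive, hout, hε]

theorem ZMod.ite_eq_one_self (v : ZMod 2) : (if v = 1 then 1 else 0 : ZMod 2) = v := by
  fin_cases v <;> rfl

theorem ip_noiseless_data_structure_exists_general (n r p : ℕ) (hp : 0 < p) :
    Nonempty (ECDS (Fin n → Bool) {y : Fin n → Bool // wt y ≤ r} (ZMod 2) p
      (∑ i ∈ Finset.range ((r + p - 1) / p + 1), n.choose i) 0 0
      (fun x q => ip x q.val)) := by
  -- `r ⌈/⌉ p` unfolds to the `(r + p - 1) / p` of the statement.
  set t := r ⌈/⌉ p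
  have hrt : r ≤ p * t := (ceilDiv_le_iff_le_mul hp).1 le_rfl
  have hcard := Fintype.card_finset_card_le (Fin n) t
  rw [Fintype.card_fin] at hcard
  let σ := Fintype.equivFinOfCardEq hcard
  choose u hu hsum using fun q : {y : Fin n → Bool // wt y ≤ r} =>
    Finset.exists_split_of_card_le_mul (M := ZMod 2) _ (q.2.trans hrt)
  refine ⟨ECDS.ofExact
    (fun x j => decide ((∑ i ∈ (σ.symm j).1, if x i then 1 else 0 : ZMod 2) = 1))
    (fun q k => σ ⟨u q k, hu q k⟩) (fun _ a => ∑ k, if a k then 1 else 0) ?_ (by simp) le_rfl⟩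
  intro x q
  simp only [Equiv.symm_apply_apply, decide_eq_true_eq]
  rw [ip_eq_sum_support, hsum]
  exact sum_congr rfl fun k _ => ZMod.ite_eq_one_self _

/-- There is a noiseless, zero-error `(p,0,0)`-data structure for the inner
product problem `IP_{n,r}` of length `N = B(n,⌈r/p⌉) = Σ_{i=0}^{⌈r/p⌉} C(n,i)`. -/
theorem ip_noiseless_data_structure_exists (n r p : ℕ)
    (hn : 0 < n) (hr : 0 < r) (hp : 0 < p) (hrn : r ≤ n) :
    Nonempty (ECDS (Fin n → Bool) {y : Fin n → Bool // wt y ≤ r} (ZMod 2) p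
      (∑ i ∈ Finset.range ((r + p - 1) / p + 1), n.choose i) 0 0
      (fun x q => ip x q.val)) :=
  ip_noiseless_data_structure_exists_general n r p hp
end

section
/- Let M and p be positive integers and let P be a multivariate polynomial over F_2 in M variables of total degree at most p − 1. Define q : (F_2^M)^p → F_2 by q(w^{(1)}, …, w^{(p)}) = P(w^{(1)} + ⋯ + w^{(p)}) (coordinatewise sum in F_2^M). Then there exist functions q^{(1)}, …, q^{(p)} : (F_2^M)^p → F_2 such that q = q^{(1)} + ⋯ + q^{(p)} pointwise, and for each j the function q^{(j)} does not depend on its j-th block argument w^{(j)} (i.e., q^{(j)}(w) = q^{(j)}(w') whenever w^{(k)} = w'^{(k)} for all k ≠ j). -/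
/-!
Substituting `x_i ↦ ∑_j w_{j,i}` turns `P` into a polynomial in the `p · M` variables `w_{j,i}`
whose total degree is still at most `p - 1`. A monomial of degree `< p` involves fewer than `p`
variables, hence misses some block `j` entirely; grouping the monomials by a block they miss
gives the pieces `q⁽ʲ⁾`.
-/

open Finset

theorem Finsupp.card_support_le_degree {σ : Type*} (d : σ →₀ ℕ) : #d.support ≤ d.degree := by
  rw [card_eq_sum_ones, degree_apply]
  exact Finset.sum_le_sum fun i hi => Nat.one_le_iff_ne_zero.2 (Finsupp.mem_support_iff.1 hi)

theorem Finsupp.exists_forall_fst_ne_of_degree_lt {ι σ : Type*} [Fintype ι] (d : ι × σ →₀ ℕ)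
    (hd : d.degree < Fintype.card ι) : ∃ j, ∀ v ∈ d.support, v.1 ≠ j := by
  classical
  have hcard : #(d.support.image Prod.fst) < #(univ : Finset ι) :=
    calc #(d.support.image Prod.fst) ≤ #d.support := card_image_le
      _ ≤ d.degree := d.card_support_le_degree
      _ < #(univ : Finset ι) := by rwa [card_univ]
  obtain ⟨j, -, hj⟩ := exists_mem_notMem_of_card_lt_card hcard
  exact ⟨j, fun v hv hvj => hj (mem_image.2 ⟨v, hv, hvj⟩)⟩

namespace MvPolynomial

variable {R σ τ ι : Type*} [CommSemiring R]

theorem totalDegree_aeval_le {g : σ → MvPolynomial τ R} {k : ℕ}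
    (hg : ∀ i, (g i).totalDegree ≤ k) (P : MvPolynomial σ R) :
    (aeval g P).totalDegree ≤ k * P.totalDegree := by
  conv_lhs => rw [P.as_sum, map_sum]
  refine totalDegree_finsetSum_le fun d hd => ?_
  calc (aeval g (monomial d (coeff d P))).totalDegree
      ≤ ∑ i ∈ d.support, k * d i := by
        rw [aeval_monomial, algebraMap_eq]
        refine (totalDegree_mul _ _).trans ?_
        rw [totalDegree_C, zero_add]
        refine (totalDegree_finsetProd _ _).trans (sum_le_sum fun i _ => ?_)
        rw [mul_comm k]
        exact (totalDegree_pow _ _).trans (Nat.mul_le_mul_left _ (hg i))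
    _ = k * d.degree := by rw [Finsupp.degree_apply, mul_sum]
    _ ≤ k * P.totalDegree := Nat.mul_le_mul_left _ (le_totalDegree hd)

theorem eval_aeval (f : τ → R) (g : σ → MvPolynomial τ R) (P : MvPolynomial σ R) :
    eval f (aeval g P) = eval (fun i => eval f (g i)) P := by
  rw [aeval_eq_bind₁, eval, eval, eval₂Hom_bind₁]

theorem eval_congr_of_forall_mem_vars {p : MvPolynomial σ R} {f g : σ → R}
    (h : ∀ i ∈ p.vars, f i = g i) : eval f p = eval g p :=
  eval₂Hom_congr' rfl (fun i hi _ => h i hi) rfl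

theorem exists_sum_eq_forall_vars_fst_ne_of_totalDegree_lt [Fintype ι]
    (q : MvPolynomial (ι × σ) R) (hq : q.totalDegree < Fintype.card ι) :
    ∃ Q : ι → MvPolynomial (ι × σ) R, ∑ j, Q j = q ∧ ∀ j, ∀ v ∈ (Q j).vars, v.1 ≠ j := by
  classical
  have : Nonempty ι := Fintype.card_pos_iff.1 (Nat.zero_lt_of_lt hq)
  have hmiss (d) (hd : d ∈ q.support) : ∃ j : ι, ∀ v ∈ d.support, v.1 ≠ j :=
    d.exists_forall_fst_ne_of_degree_lt ((le_totalDegree hd).trans_lt hq)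
  choose! block hblock using hmiss
  refine ⟨fun j => ∑ d ∈ q.support with block d = j, monomial d (coeff d q), ?_, ?_⟩
  · exact (sum_fiberwise_of_maps_to (fun _ _ => mem_univ _) _).trans q.as_sum.symm
  · intro j v hv
    obtain ⟨d, hd, hvd⟩ := mem_biUnion.1 (vars_sum_subset _ _ hv)
    obtain ⟨hdq, rfl⟩ := mem_filter.1 hd
    rw [vars_monomial (mem_support_iff.1 hdq)] at hvd
    exact hblock d hdq v hvd

end MvPolynomial

open MvPolynomial in
theorem eval_sum_decomposition_general (M p : ℕ) (hp : 0 < p)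
    (P : MvPolynomial (Fin M) (ZMod 2)) (hdeg : P.totalDegree ≤ p - 1) :
    ∃ Q : Fin p → ((Fin p → Fin M → ZMod 2) → ZMod 2),
      (∀ w : Fin p → Fin M → ZMod 2,
        MvPolynomial.eval (fun i => ∑ j, w j i) P = ∑ j, Q j w) ∧
      (∀ j : Fin p, ∀ w w' : Fin p → Fin M → ZMod 2,
        (∀ k, k ≠ j → w k = w' k) → Q j w = Q j w') := by
  set q : MvPolynomial (Fin p × Fin M) (ZMod 2) := aeval (fun i => ∑ j : Fin p, X (j, i)) P
    with hq_def
  have hq : q.totalDegree < Fintype.card (Fin p) := by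
    refine (totalDegree_aeval_le (k := 1) (fun i => ?_) P).trans_lt ?_
    · exact totalDegree_finsetSum_le fun j _ => (totalDegree_X _).le
    · rw [Fintype.card_fin]; omega
  obtain ⟨Q, hsum, hvars⟩ := exists_sum_eq_forall_vars_fst_ne_of_totalDegree_lt q hq
  refine ⟨fun j w => eval (fun v => w v.1 v.2) (Q j), fun w => ?_, fun j w w' hww' => ?_⟩
  · rw [← map_sum, hsum, hq_def, eval_aeval]
    simp only [map_sum, eval_X]
  · exact eval_congr_of_forall_mem_vars fun v hv => by rw [hww' v.1 (hvars j v hv)]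

/-- Let `P` be a polynomial over `F₂` in `M` variables of total degree at most
`p − 1`, and let `q(w⁽¹⁾,…,w⁽ᵖ⁾) = P(w⁽¹⁾ + ⋯ + w⁽ᵖ⁾)`. Then `q` decomposes as a sum
`q = q⁽¹⁾ + ⋯ + q⁽ᵖ⁾` where each `q⁽ʲ⁾` does not depend on its `j`-th block argument. -/
theorem eval_sum_decomposition (M p : ℕ) (hM : 0 < M) (hp : 0 < p)
    (P : MvPolynomial (Fin M) (ZMod 2)) (hdeg : P.totalDegree ≤ p - 1) :
    ∃ Q : Fin p → ((Fin p → Fin M → ZMod 2) → ZMod 2),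
      (∀ w : Fin p → Fin M → ZMod 2,
        MvPolynomial.eval (fun i => ∑ j, w j i) P = ∑ j, Q j w) ∧
      (∀ j : Fin p, ∀ w w' : Fin p → Fin M → ZMod 2,
        (∀ k, k ≠ j → w k = w' k) → Q j w = Q j w') :=
  eval_sum_decomposition_general M p hp P hdeg
end

section
/- There exist universal constants c > 0 and C > 0 such that for all positive integers n, s with n ≥ 2 and s ≤ n, there exists a (1, c/s, 1/4)-error-correcting data structure for the s-out-of-n Membership problem of length at most C · s · log₂ n. -/
open Finset Function

lemma graph_injective {ι α β : Type*} (h : ι → α → β) (i : α) : Injective fun j => (j, h j i) :=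
  fun _ _ hj => (Prod.ext_iff.1 hj).1

section Neighborhood

variable {ι α β : Type*} [Fintype ι] [DecidableEq ι] [DecidableEq β]

def neighbors (h : ι → α → β) (i : α) : Finset (ι × β) := univ.image fun j => (j, h j i)

def neighborhood (h : ι → α → β) (S : Finset α) : Finset (ι × β) := S.biUnion (neighbors h)

@[simp] lemma mem_neighbors {h : ι → α → β} {i : α} {c : ι × β} :
    c ∈ neighbors h i ↔ h c.1 i = c.2 := by
  obtain ⟨j, v⟩ := c
  simp [neighbors, eq_comm]

@[simp] lemma mem_neighborhood {h : ι → α → β} {S : Finset α} {c : ι × β} :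
    c ∈ neighborhood h S ↔ ∃ i ∈ S, h c.1 i = c.2 := by
  simp [neighborhood]

lemma neighbors_subset_neighborhood {h : ι → α → β} {S : Finset α} {i : α} (hi : i ∈ S) :
    neighbors h i ⊆ neighborhood h S :=
  subset_biUnion_of_mem _ hi

lemma card_neighbors (h : ι → α → β) (i : α) : #(neighbors h i) = Fintype.card ι :=
  card_image_of_injective _ (graph_injective h i)

lemma card_filter_neighbors (h : ι → α → β) (i : α) (p : ι × β → Prop) [DecidablePred p] :
    #{c ∈ neighbors h i | p c} = #{j | p (j, h j i)} := by
  rw [neighbors, filter_image, card_image_of_injective _ (graph_injective h i)]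

lemma card_neighborhood_le (h : ι → α → β) (S : Finset α) :
    #(neighborhood h S) ≤ Fintype.card ι * #S := by
  rw [mul_comm]
  exact card_biUnion_le_card_mul _ _ _ fun i _ => (card_neighbors h i).le

lemma card_neighborhood_union_le [DecidableEq α] (h : ι → α → β) (T I : Finset α) :
    #(neighborhood h (T ∪ I)) ≤
      #(neighborhood h T) + ∑ i ∈ I, #(neighbors h i \ neighborhood h T) := by
  have hcover : neighborhood h (T ∪ I) ⊆
      neighborhood h T ∪ I.biUnion fun i => neighbors h i \ neighborhood h T := by
    intro c hc
    obtain ⟨i, hi, hci⟩ := mem_biUnion.1 hc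
    by_cases hcT : c ∈ neighborhood h T
    · exact mem_union_left _ hcT
    · rcases mem_union.1 hi with hiT | hiI
      · exact absurd (neighbors_subset_neighborhood hiT hci) hcT
      · exact mem_union_right _ (mem_biUnion.2 ⟨i, hiI, mem_sdiff.2 ⟨hci, hcT⟩⟩)
  exact (card_le_card hcover).trans
    ((card_union_le _ _).trans (Nat.add_le_add_left card_biUnion_le _))

/-- Viewing `h` as the bipartite graph joining `i` to the cells `(j, h j i)`, this is the
lossless-expansion property `|Γ(S)| ≥ (t - D) |S|` for all `|S| ≤ k`, where `t = |ι|`. -/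
def IsLosslessExpander (h : ι → α → β) (k D : ℕ) : Prop :=
  ∀ S : Finset α, #S ≤ k → Fintype.card ι * #S ≤ #(neighborhood h S) + D * #S

end Neighborhood

section Counting

variable {ι α β : Type*} {u : ℕ}

def repeats [Fintype ι] [DecidableEq β] (h : ι → α → β) (e : Fin u ↪ α) :
    Finset (Fin u × ι) :=
  {d | ∃ k < d.1, h d.2 (e k) = h d.2 (e d.1)}

lemma card_mul_le_card_neighborhood_add_card_repeats [Fintype ι] [DecidableEq ι] [DecidableEq β]
    (h : ι → α → β) (e : Fin u ↪ α) :
    Fintype.card ι * u ≤ #(neighborhood h (univ.map e)) + #(repeats h e) := by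
  have hfresh : #{d : Fin u × ι | d ∉ repeats h e} ≤ #(neighborhood h (univ.map e)) := by
    refine card_le_card_of_injOn (fun d => (d.2, h d.2 (e d.1))) ?_ ?_
    · intro d _
      exact mem_neighborhood.2 ⟨e d.1, mem_map_of_mem _ (mem_univ _), rfl⟩
    · rintro ⟨k₁, j₁⟩ hd₁ ⟨k₂, j₂⟩ hd₂ hd
      simp only [coe_filter, Set.mem_ofPred_eq, repeats, mem_filter, mem_univ, true_and,
        not_exists, not_and, Prod.mk.injEq] at hd₁ hd₂ hd
      obtain ⟨rfl, hv⟩ := hd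
      rcases lt_trichotomy k₁ k₂ with hk | rfl | hk
      · exact absurd hv (hd₂ k₁ hk)
      · rfl
      · exact absurd hv.symm (hd₁ k₂ hk)
  have hsplit := card_filter_add_card_filter_not (s := (univ : Finset (Fin u × ι)))
    (· ∈ repeats h e)
  rw [card_univ, Fintype.card_prod, Fintype.card_fin, filter_mem_eq_inter, univ_inter] at hsplit
  rw [mul_comm, ← hsplit]
  omega

def pins [DecidableEq ι] [DecidableEq α] (A : Finset (Fin u × ι)) (e : Fin u ↪ α) :
    Finset (ι × α) :=
  A.image fun d => (d.2, e d.1)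

lemma mk_mem_pins_iff [DecidableEq ι] [DecidableEq α] {A : Finset (Fin u × ι)} {e : Fin u ↪ α}
    {j : ι} {k : Fin u} : (j, e k) ∈ pins A e ↔ (k, j) ∈ A := by
  constructor
  · intro hp
    obtain ⟨⟨k', j'⟩, hA, hkj⟩ := mem_image.1 hp
    simp only [Prod.mk.injEq, e.injective.eq_iff] at hkj
    obtain ⟨rfl, rfl⟩ := hkj
    exact hA
  · exact fun hA => mem_image_of_mem _ hA

lemma card_pins [DecidableEq ι] [DecidableEq α] (A : Finset (Fin u × ι)) (e : Fin u ↪ α) :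
    #(pins A e) = #A :=
  card_image_of_injective _ fun d₁ d₂ hd => by
    simp only [Prod.mk.injEq, e.injective.eq_iff] at hd
    exact Prod.ext hd.2 hd.1

def IsCompatible (A : Finset (Fin u × ι)) (ptr : A → Fin u) (e : Fin u ↪ α)
    (h : ι → α → β) : Prop :=
  ∀ a : A, ptr a < a.1.1 ∧ h a.1.2 (e (ptr a)) = h a.1.2 (e a.1.1)

instance [DecidableEq β] (A : Finset (Fin u × ι)) (ptr : A → Fin u) (e : Fin u ↪ α) :
    DecidablePred (IsCompatible (β := β) A ptr e) := fun _ => by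
  unfold IsCompatible; infer_instance

lemma IsCompatible.eq_of_eqOn [DecidableEq ι] [DecidableEq α] {A : Finset (Fin u × ι)}
    {ptr : A → Fin u} {e : Fin u ↪ α} {h₁ h₂ : ι → α → β} (hc₁ : IsCompatible A ptr e h₁)
    (hc₂ : IsCompatible A ptr e h₂) (hoff : ∀ c ∉ pins A e, h₁ c.1 c.2 = h₂ c.1 c.2) :
    h₁ = h₂ := by
  have hpinned : ∀ k j, h₁ j (e k) = h₂ j (e k) := by
    intro k
    induction k using WellFoundedLT.induction with
    | ind k ih =>
      intro j
      by_cases hA : (k, j) ∈ A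
      · obtain ⟨hlt, he₁⟩ := hc₁ ⟨_, hA⟩
        rw [← he₁, ← (hc₂ ⟨_, hA⟩).2, ih _ hlt]
      · exact hoff (j, e k) (mk_mem_pins_iff.not.2 hA)
  funext j i
  by_cases hi : ∃ k, e k = i
  · obtain ⟨k, rfl⟩ := hi
    exact hpinned k j
  · refine hoff (j, i) fun hp => hi ?_
    obtain ⟨d, -, hd⟩ := mem_image.1 hp
    exact ⟨d.1, (Prod.ext_iff.1 hd).2⟩

lemma card_compatible_mul_le [Fintype ι] [DecidableEq ι] [Fintype α] [DecidableEq α]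
    [Fintype β] [DecidableEq β] (A : Finset (Fin u × ι)) (ptr : A → Fin u) (e : Fin u ↪ α) :
    #{h : ι → α → β | IsCompatible A ptr e h} * Fintype.card β ^ #A ≤
      Fintype.card (ι → α → β) := by
  have hinj : #{h : ι → α → β | IsCompatible A ptr e h} ≤
      Fintype.card (↥(pins A e)ᶜ → β) := by
    rw [← card_univ]
    refine card_le_card_of_injOn (fun h c => h c.1.1 c.1.2) (fun _ _ => mem_univ _) ?_
    intro h₁ hh₁ h₂ hh₂ heq
    simp only [coe_filter, Set.mem_ofPred_eq, mem_univ, true_and] at hh₁ hh₂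
    exact hh₁.eq_of_eqOn hh₂ fun c hc => congrFun heq ⟨c, mem_compl.2 hc⟩
  calc _ ≤ Fintype.card (↥(pins A e)ᶜ → β) * Fintype.card β ^ #(pins A e) := by
        rw [card_pins]; exact Nat.mul_le_mul_right _ hinj
    _ = Fintype.card (ι → α → β) := by
        rw [Fintype.card_fun, Fintype.card_coe, ← pow_add, card_compl_add_card,
          Fintype.card_pi, Fintype.card_prod]
        simp [← pow_mul, mul_comm]

/-- The data certifying `R` repeated darts of some `h` on a `u`-set: the darts, a pointer from
each to an earlier index of the same row, and the enumeration. A pointer stays inside its row,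
which is why it costs a factor `u` rather than `t u`. -/
abbrev CollisionWitness (ι α : Type*) (u R : ℕ) : Type _ :=
  Σ A : {A : Finset (Fin u × ι) // #A = R}, (A.1 → Fin u) × (Fin u ↪ α)

lemma card_collisionWitness_le [Fintype ι] [DecidableEq ι] [Fintype α] [DecidableEq α]
    (R : ℕ) :
    Fintype.card (CollisionWitness ι α u R) ≤
      (Fintype.card ι * u).choose R * u ^ R * Fintype.card α ^ u := by
  have hfibre : ∀ A : {A : Finset (Fin u × ι) // #A = R},
      Fintype.card ((A.1 → Fin u) × (Fin u ↪ α)) = u ^ R * (Fintype.card α).descFactorial u := by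
    intro A
    rw [Fintype.card_prod, Fintype.card_fun, Fintype.card_coe, A.2, Fintype.card_embedding_eq,
      Fintype.card_fin]
  have hshapes : Fintype.card {A : Finset (Fin u × ι) // #A = R} =
      (Fintype.card ι * u).choose R := by
    rw [Fintype.card_finset_len, Fintype.card_prod, Fintype.card_fin, mul_comm]
  rw [Fintype.card_sigma, sum_congr rfl fun A _ => hfibre A, sum_const, card_univ, hshapes,
    smul_eq_mul, mul_assoc]
  exact Nat.mul_le_mul_left _ (Nat.mul_le_mul_left _ (Nat.descFactorial_le_pow _ _))

end Counting

section Existence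

variable {ι α β : Type*} [Fintype ι] [DecidableEq ι] [Fintype α] [DecidableEq α] [Fintype β]
  [DecidableEq β]

lemma card_filter_exists_neighborhood_lossy_mul_le (u R : ℕ) :
    #{h : ι → α → β | ∃ S : Finset α, #S = u ∧ #(neighborhood h S) + R ≤ Fintype.card ι * u} *
        Fintype.card β ^ R ≤
      (Fintype.card ι * u).choose R * u ^ R * Fintype.card α ^ u * Fintype.card (ι → α → β) := by
  have hcover :
      ({h : ι → α → β | ∃ S : Finset α, #S = u ∧ #(neighborhood h S) + R ≤ Fintype.card ι * u} :
        Finset _) ⊆ (univ : Finset (CollisionWitness ι α u R)).biUnion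
        fun w => {h | IsCompatible w.1.1 w.2.1 w.2.2 h} := by
    intro h hh
    obtain ⟨S, rfl, hlossy⟩ := (mem_filter.1 hh).2
    let e : Fin #S ↪ α := S.equivFin.symm.toEmbedding.trans (Embedding.subtype _)
    have hSe : univ.map e = S := by
      ext i
      simp only [mem_map, mem_univ, true_and]
      exact ⟨fun ⟨k, hk⟩ => hk ▸ (S.equivFin.symm k).2,
        fun hi => ⟨S.equivFin ⟨i, hi⟩, by simp [e]⟩⟩
    have hR : R ≤ #(repeats h e) := by
      have := card_mul_le_card_neighborhood_add_card_repeats h e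
      rw [hSe] at this
      omega
    obtain ⟨A, hA, hAR⟩ := exists_subset_card_eq hR
    have hptr : ∀ a : A, ∃ k < a.1.1, h a.1.2 (e k) = h a.1.2 (e a.1.1) := fun a => by
      simpa [repeats] using hA a.2
    choose ptr hptr using hptr
    exact mem_biUnion.2 ⟨⟨⟨A, hAR⟩, ptr, e⟩, mem_univ _, mem_filter.2 ⟨mem_univ _, hptr⟩⟩
  calc _ ≤ (∑ w : CollisionWitness ι α u R, #{h : ι → α → β | IsCompatible w.1.1 w.2.1 w.2.2 h})
        * Fintype.card β ^ R :=
        Nat.mul_le_mul_right _ ((card_le_card hcover).trans card_biUnion_le)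
    _ ≤ ∑ _w : CollisionWitness ι α u R, Fintype.card (ι → α → β) := by
        rw [sum_mul]
        refine sum_le_sum fun w _ => ?_
        simpa [w.1.2] using card_compatible_mul_le (β := β) w.1.1 w.2.1 w.2.2
    _ ≤ _ := by
        rw [sum_const, card_univ, smul_eq_mul]
        exact Nat.mul_le_mul_right _ (card_collisionWitness_le R)

theorem exists_isLosslessExpander [Nonempty β] (k D : ℕ)
    (hsum : ∑ u ∈ range (k + 1), ((Fintype.card ι * u).choose (D * u + 1) : ℝ) *
      (u / Fintype.card β) ^ (D * u + 1) * Fintype.card α ^ u < 1) :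
    ∃ h : ι → α → β, IsLosslessExpander h k D := by
  by_contra hnone
  set t := Fintype.card ι
  set M := Fintype.card (ι → α → β)
  set lossy : ℕ → Finset (ι → α → β) := fun u =>
    {h | ∃ S : Finset α, #S = u ∧ #(neighborhood h S) + (D * u + 1) ≤ t * u}
  have hcover : (univ : Finset (ι → α → β)) ⊆ (range (k + 1)).biUnion lossy := by
    intro h _
    obtain ⟨S, hSk, hS⟩ : ∃ S : Finset α, #S ≤ k ∧ #(neighborhood h S) + D * #S < t * #S := by
      simpa [IsLosslessExpander] using not_exists.1 hnone h
    exact mem_biUnion.2 ⟨#S, mem_range.2 (by omega), mem_filter.2 ⟨mem_univ _, S, rfl, hS⟩⟩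
  have hlossy : ∀ u, (#(lossy u) : ℝ) ≤ ((t * u).choose (D * u + 1) : ℝ) *
      (u / Fintype.card β) ^ (D * u + 1) * Fintype.card α ^ u * M := by
    intro u
    have hb : (0 : ℝ) < Fintype.card β ^ (D * u + 1) := by positivity
    have hcount :=
      card_filter_exists_neighborhood_lossy_mul_le (ι := ι) (α := α) (β := β) u (D * u + 1)
    rw [div_pow, show ∀ a b c d : ℝ, a * (b / c) * d * M = a * b * d * M / c by intros; ring,
      le_div_iff₀ hb]
    exact_mod_cast hcount
  have hM : (0 : ℝ) < M := by positivity
  have hcard : (M : ℝ) ≤ ∑ u ∈ range (k + 1), (#(lossy u) : ℝ) := by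
    have := (card_le_card hcover).trans card_biUnion_le
    rw [card_univ] at this
    exact_mod_cast this
  have := hcard.trans (sum_le_sum fun u _ => hlossy u)
  rw [← sum_mul] at this
  nlinarith

end Existence

theorem exists_pairwiseDisjoint_subsets_of_forall_mul_card_le {α γ : Type*} [DecidableEq γ]
    (V : Finset α) (N : α → Finset γ) (m : ℕ) (hV : ∀ S ⊆ V, m * #S ≤ #(S.biUnion N)) :
    ∃ P : α → Finset γ, (∀ i ∈ V, P i ⊆ N i ∧ #(P i) = m) ∧ (V : Set α).PairwiseDisjoint P := by
  classical
  -- Hall's theorem for `m` copies of every vertex of `V`.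
  have hhall : ∀ W : Finset (V × Fin m), #W ≤ #(W.biUnion fun w => N w.1) := by
    intro W
    set S := (W.image Prod.fst).map (Embedding.subtype _)
    have hWS : W.biUnion (fun w => N w.1) = S.biUnion N := by
      ext c; simp [S]
    have hW : #W ≤ m * #S := by
      have := card_le_card fun w (hw : w ∈ W) =>
        mem_product.2 ⟨mem_image_of_mem Prod.fst hw, mem_univ w.2⟩
      rwa [card_product, card_univ, Fintype.card_fin, mul_comm, ← card_map (Embedding.subtype _)]
        at this
    rw [hWS]
    exact hW.trans (hV S fun i hi => by obtain ⟨w, -, rfl⟩ := mem_map.1 hi; exact w.2)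
  obtain ⟨f, hf, hfN⟩ := (all_card_le_biUnion_card_iff_exists_injective _).1 hhall
  refine ⟨fun i => if hi : i ∈ V then univ.image fun k => f (⟨i, hi⟩, k) else ∅, ?_, ?_⟩
  · intro i hi
    simp only [hi, dite_true]
    refine ⟨fun c hc => ?_, (card_image_of_injective _ fun k k' hk => ?_).trans (card_fin m)⟩
    · obtain ⟨k, -, rfl⟩ := mem_image.1 hc
      exact hfN _
    · exact (Prod.ext_iff.1 (hf hk)).2
  · intro i hi i' hi' hne
    simp only [Finset.mem_coe] at hi hi'
    simp only [hi, hi', dite_true, Function.onFun]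
    refine disjoint_left.2 fun c hc hc' => hne ?_
    obtain ⟨k, -, rfl⟩ := mem_image.1 hc
    obtain ⟨k', -, hk⟩ := mem_image.1 hc'
    exact congrArg Subtype.val (Prod.ext_iff.1 (hf hk)).1.symm

section Encoding

variable {ι α β : Type*} [Fintype ι] [DecidableEq ι] [Fintype α] [DecidableEq α] [DecidableEq β]
  {h : ι → α → β} {k D : ℕ}

/-- These points also receive private cells from Hall's theorem, which keeps the cells given to
`T` away from them. -/
def crowded (h : ι → α → β) (T : Finset α) (D : ℕ) : Finset α :=
  {i | i ∉ T ∧ 2 * D < #(neighbors h i ∩ neighborhood h T)}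

lemma IsLosslessExpander.card_crowded_le (hh : IsLosslessExpander h k D) {T : Finset α}
    (hT : 2 * #T ≤ k) : #(crowded h T D) ≤ #T := by
  by_contra! hlt
  obtain ⟨I, hI, hIT⟩ := exists_subset_card_eq hlt.le
  have hI' : ∀ i ∈ I, i ∉ T ∧ 2 * D < #(neighbors h i ∩ neighborhood h T) := fun i hi => by
    simpa [crowded] using hI hi
  obtain rfl | ⟨i₀, hi₀⟩ := T.eq_empty_or_nonempty
  · obtain ⟨i, hi⟩ := card_pos.1 (lt_of_le_of_lt (Nat.zero_le _) hlt)
    simp [crowded, neighborhood] at hi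
  have hdisj : Disjoint T I := disjoint_right.2 fun i hi => (hI' i hi).1
  have hexp := hh (T ∪ I) (by rw [card_union_of_disjoint hdisj]; omega)
  rw [card_union_of_disjoint hdisj, hIT] at hexp
  have hfresh : ∀ i ∈ I, #(neighbors h i \ neighborhood h T) + (2 * D + 1) ≤ Fintype.card ι :=
      fun i hi => by
    have := card_sdiff_add_card_inter (neighbors h i) (neighborhood h T)
    rw [card_neighbors] at this
    have := (hI' i hi).2
    omega
  have hsum : ∑ i ∈ I, #(neighbors h i \ neighborhood h T) + #T * (2 * D + 1) ≤
      #T * Fintype.card ι := by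
    have := sum_le_sum hfresh
    rwa [sum_add_distrib, sum_const, sum_const, hIT, smul_eq_mul, smul_eq_mul] at this
  have hunion := card_neighborhood_union_le h T I
  have hT := card_neighborhood_le h T
  have hpos := card_pos.2 ⟨i₀, hi₀⟩
  nlinarith

theorem IsLosslessExpander.exists_cells (hh : IsLosslessExpander h k D) (T : Finset α)
    (hT : 2 * #T ≤ k) :
    ∃ U : Finset (ι × β),
      (∀ i ∈ T, #(neighbors h i \ U) ≤ D) ∧ ∀ i ∉ T, #(neighbors h i ∩ U) ≤ 2 * D := by
  set V := T ∪ crowded h T D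
  have hV : #V ≤ k := (card_union_le _ _).trans (by have := hh.card_crowded_le hT; omega)
  obtain ⟨P, hPN, hPdisj⟩ := exists_pairwiseDisjoint_subsets_of_forall_mul_card_le V (neighbors h)
    (Fintype.card ι - D) fun S hS => by
      have := hh S ((card_le_card hS).trans hV)
      rw [Nat.sub_mul]
      exact Nat.sub_le_of_le_add this
  have hfree : ∀ i ∈ V, #(neighbors h i \ P i) ≤ D := fun i hi => by
    rw [card_sdiff_of_subset (hPN i hi).1, (hPN i hi).2, card_neighbors]
    omega
  refine ⟨T.biUnion P, fun i hi => ?_, fun i hi => ?_⟩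
  · exact (card_le_card (sdiff_subset_sdiff le_rfl (subset_biUnion_of_mem P hi))).trans
      (hfree i (mem_union_left _ hi))
  by_cases hc : i ∈ crowded h T D
  · refine (card_le_card fun c hc' => ?_).trans ((hfree i (mem_union_right _ hc)).trans
      (by omega))
    obtain ⟨hci, hcU⟩ := mem_inter.1 hc'
    obtain ⟨w, hw, hcw⟩ := mem_biUnion.1 hcU
    refine mem_sdiff.2 ⟨hci, fun hcP => ?_⟩
    have hwi : w ≠ i := fun hwi => hi (hwi ▸ hw)
    exact disjoint_left.1 (hPdisj (mem_union_left _ hw) (mem_union_right _ hc) hwi) hcw hcP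
  · have hU : T.biUnion P ⊆ neighborhood h T := biUnion_subset.2 fun w hw =>
      (hPN w (mem_union_left _ hw)).1.trans (neighbors_subset_neighborhood hw)
    refine (card_le_card (inter_subset_inter_left hU)).trans ?_
    simpa [crowded, hi] using hc

theorem IsLosslessExpander.exists_encoding (hh : IsLosslessExpander h k D) (x : α → Bool)
    (hx : 2 * #{i | x i = true} ≤ k) :
    ∃ U : Finset (ι × β), ∀ i, #{j | decide ((j, h j i) ∈ U) ≠ x i} ≤ 2 * D := by
  obtain ⟨U, hone, hzero⟩ := hh.exists_cells _ hx
  refine ⟨U, fun i => ?_⟩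
  cases hxi : x i
  · have := hzero i (by simp [hxi])
    rw [← filter_mem_eq_inter, card_filter_neighbors] at this
    simpa using this
  · have := hone i (by simp [hxi])
    rw [sdiff_eq_filter, card_filter_neighbors] at this
    simpa using this.trans (by omega)

end Encoding

lemma card_le_card_filter_eq_add_add_hammingDist {σ κ γ : Type*} [Fintype σ] [Fintype κ]
    [DecidableEq γ] {π : σ → κ} (hπ : Injective π) (y z : κ → γ) (a : γ) :
    Fintype.card σ ≤ #{s | y (π s) = a} + #{s | z (π s) ≠ a} + hammingDist y z := by
  classical
  have hcorrupt : #{s | y (π s) ≠ z (π s)} ≤ hammingDist y z :=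
    card_le_card_of_injOn π (fun s hs => by simpa using hs) hπ.injOn
  have hwrong : ({s | ¬y (π s) = a} : Finset σ) ⊆
      ({s | z (π s) ≠ a} : Finset σ) ∪ ({s | y (π s) ≠ z (π s)} : Finset σ) := by
    intro s hs
    simp only [mem_filter, mem_union, mem_univ, true_and] at hs ⊢
    by_contra! hboth
    exact hs (hboth.2.trans hboth.1)
  have hsplit := card_filter_add_card_filter_not (s := (univ : Finset σ)) fun s => y (π s) = a
  rw [card_univ] at hsplit
  have := (card_le_card hwrong).trans (card_union_le _ _)
  omega

theorem nonempty_ecds_of_isLosslessExpander {n s t b D : ℕ} {h : Fin t → Fin n → Fin b}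
    (hh : IsLosslessExpander h (2 * s) D) (ht : 0 < t) {δ ε : ℝ}
    (hδε : 2 * D + δ * (t * b : ℕ) ≤ ε * t) :
    Nonempty (ECDS {x : Fin n → Bool // wt x ≤ s} (Fin n) Bool 1 (t * b) δ ε
      fun x i => x.val i) := by
  choose U hU using fun x : {x : Fin n → Bool // wt x ≤ s} =>
    hh.exists_encoding x.1 (Nat.mul_le_mul_left 2 x.2)
  let cell : Fin t × Fin b ≃ Fin (t * b) := finProdFinEquiv
  refine ⟨{
    enc := fun x pos => decide (cell.symm pos ∈ U x)
    seeds := t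
    seeds_pos := ht
    probe := fun _ q j _ => cell (j, h j q)
    out := fun _ _ a => a 0
    correct := fun q x y hy => ?_ }⟩
  have hrun : ∀ j,
      runAns (p := 1) (fun _ q j _ => cell (j, h j q)) y q j 0 = y (cell (j, h j q)) :=
    fun j => by rw [runAns]
  simp only [hrun]
  have hcount := card_le_card_filter_eq_add_add_hammingDist
    (π := fun j => cell (j, h j q)) (fun _ _ hj => graph_injective h q (cell.injective hj))
    y (fun pos => decide (cell.symm pos ∈ U x)) (x.1 q)
  simp only [Equiv.symm_apply_apply, Fintype.card_fin] at hcount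
  have hbad := hU x q
  have : (t : ℝ) ≤ #{j | y (cell (j, h j q)) = x.1 q} + 2 * D +
      hammingDist y fun pos => decide (cell.symm pos ∈ U x) := by
    exact_mod_cast hcount.trans (by omega)
  linarith

lemma choose_mul_pow_mul_two_pow_le {n L u : ℕ} (hL : 0 < L) (hn : n ≤ 2 ^ L) :
    (16 * L * u).choose (L * u + 1) * n ^ u * 2 ^ (u + 2) ≤ 2 ^ (18 * (L * u + 1)) := by
  have hu : u ≤ L * u := Nat.le_mul_of_pos_left u hL
  calc _ ≤ 2 ^ (16 * L * u) * (2 ^ L) ^ u * 2 ^ (u + 2) := by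
        gcongr
        · exact Nat.choose_le_two_pow _ _
    _ = 2 ^ (17 * (L * u) + u + 2) := by ring
    _ ≤ _ := Nat.pow_le_pow_right two_pos (by omega)

lemma sum_expansion_failure_lt_one {n s L : ℕ} (hs : 0 < s) (hL : 0 < L) (hn : n ≤ 2 ^ L) :
    ∑ u ∈ range (2 * s + 1), ((16 * L * u).choose (L * u + 1) : ℝ) *
      (u / ((2 ^ 19 * s : ℕ) : ℝ)) ^ (L * u + 1) * n ^ u < 1 := by
  simp only [Nat.cast_mul, Nat.cast_pow, Nat.cast_ofNat]
  have hterm : ∀ u ∈ range (2 * s + 1), ((16 * L * u).choose (L * u + 1) : ℝ) *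
      (u / (2 ^ 19 * s)) ^ (L * u + 1) * n ^ u ≤ (1 / 2) ^ u / 4 := by
    intro u hu
    have hu2s : (u : ℝ) ≤ 2 * s := by exact_mod_cast Nat.lt_succ_iff.1 (mem_range.1 hu)
    have hratio : (u : ℝ) / (2 ^ 19 * s) ≤ 1 / 2 ^ 18 := by
      rw [div_le_div_iff₀ (by positivity) (by positivity)]
      linarith
    have hnat : ((16 * L * u).choose (L * u + 1) : ℝ) * n ^ u * 2 ^ (u + 2) ≤
        2 ^ (18 * (L * u + 1)) := by
      exact_mod_cast choose_mul_pow_mul_two_pow_le hL hn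
    calc _ ≤ ((16 * L * u).choose (L * u + 1) : ℝ) * (1 / 2 ^ 18) ^ (L * u + 1) * n ^ u := by
          gcongr
      _ = ((16 * L * u).choose (L * u + 1) : ℝ) * n ^ u / 2 ^ (18 * (L * u + 1)) := by
          rw [one_div_pow, ← pow_mul]
          ring
      _ ≤ 1 / 2 ^ (u + 2) := by
          rw [div_le_div_iff₀ (by positivity) (by positivity)]
          linarith
      _ = (1 / 2) ^ u / 4 := by
          rw [pow_add, one_div_pow]
          ring
  calc _ ≤ ∑ u ∈ range (2 * s + 1), (1 / 2 : ℝ) ^ u / 4 := sum_le_sum hterm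
    _ = (∑ u ∈ range (2 * s + 1), (1 / 2 : ℝ) ^ u) / 4 := by rw [sum_div]
    _ ≤ 2 / 4 := by gcongr; exact sum_geometric_two_le _
    _ < 1 := by norm_num

lemma natLog_add_one_le_two_mul_logb {n : ℕ} (hn : 2 ≤ n) :
    (Nat.log 2 n : ℝ) + 1 ≤ 2 * Real.logb 2 n := by
  have hlog : (1 : ℝ) ≤ Nat.log 2 n := by exact_mod_cast Nat.log_pos one_lt_two hn
  have := Real.natLog_le_logb n 2
  push_cast at this
  linarith

/-- There are universal constants `c, C > 0` such that for all `n ≥ 2` and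
`1 ≤ s ≤ n` there is a `(1, c/s, 1/4)`-error-correcting data structure for the
`s`-out-of-`n` Membership problem of length at most `C·s·log₂ n`. -/
theorem one_probe_membership_ecds_exists :
    ∃ c C : ℝ, 0 < c ∧ 0 < C ∧
      ∀ n s : ℕ, 2 ≤ n → 0 < s → s ≤ n →
        ∃ N : ℕ, (N : ℝ) ≤ C * s * Real.logb 2 n ∧
          Nonempty (ECDS {x : Fin n → Bool // wt x ≤ s} (Fin n) Bool 1 N (c / s) (1 / 4)
            (fun x i => x.val i)) := by
  refine ⟨1 / 2 ^ 22, 2 ^ 24, by norm_num, by norm_num, fun n s hn hs _ => ?_⟩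
  set L := Nat.log 2 n + 1 with hLdef
  have : NeZero (2 ^ 19 * s) := ⟨by positivity⟩
  have hL : 0 < L := Nat.succ_pos _
  have hnL : n ≤ 2 ^ L := (Nat.lt_pow_succ_log_self one_lt_two n).le
  obtain ⟨h, hh⟩ := exists_isLosslessExpander (ι := Fin (16 * L)) (α := Fin n)
    (β := Fin (2 ^ 19 * s)) (2 * s) L
    (by simpa only [Fintype.card_fin] using sum_expansion_failure_lt_one hs hL hnL)
  refine ⟨16 * L * (2 ^ 19 * s), ?_,
    nonempty_ecds_of_isLosslessExpander hh (by positivity) ?_⟩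
  · have := natLog_add_one_le_two_mul_logb hn
    rw [hLdef]
    push_cast
    nlinarith
  · have : (s : ℝ) ≠ 0 := by positivity
    push_cast
    field_simp
    norm_num
end

section
/- Let a and b be integers with a ≥ 2 and b ≥ 1. Then a · C(ab − a, b − 1) / C(ab, b) ≥ (1 − 1/(a−1))^{a−1}, where C(·,·) denotes the binomial coefficient. (The left-hand side is the probability that, when b balls are placed uniformly at random into ab positions, exactly one ball lands among the first a positions.) -/
/-!
Choosing disjoint subsets of sizes `b - 1` and `a - 1` of an `(ab - 1)`-set in either order,
together with `C(ab, b) = a · C(ab - 1, b - 1)`, gives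
`a · C(ab - a, b - 1) / C(ab, b) = (ab - b)↓(a - 1) / (ab - 1)↓(a - 1)`,
a product of the `a - 1` factors `(ab - b - i) / (ab - 1 - i)` with `i ≤ a - 2`,
each at least `(a - 2) / (a - 1)`.
-/

open Nat Finset

theorem Nat.choose_mul_choose_sub_comm (m p q : ℕ) :
    m.choose p * (m - p).choose q = m.choose q * (m - q).choose p := by
  have hp := choose_mul (n := m) (k := p + q) (s := p) (le_add_right p q)
  have hq := choose_mul (n := m) (k := p + q) (s := q) (le_add_left q p)
  rw [Nat.add_sub_cancel_left] at hp
  rw [Nat.add_sub_cancel_right, ← choose_symm_add] at hq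
  rw [← hp, ← hq]

theorem Nat.descFactorial_mul_choose_sub_comm (m p q : ℕ) :
    m.descFactorial q * (m - q).choose p = m.choose p * (m - p).descFactorial q := by
  rw [descFactorial_eq_factorial_mul_choose, descFactorial_eq_factorial_mul_choose, mul_assoc,
    ← choose_mul_choose_sub_comm]
  ring

theorem mul_choose_mul_descFactorial_eq_choose_mul_descFactorial {a b : ℕ} (ha : 1 ≤ a)
    (hb : 1 ≤ b) :
    a * (a * b - a).choose (b - 1) * (a * b - 1).descFactorial (a - 1) =
      (a * b).choose b * (a * b - b).descFactorial (a - 1) := by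
  obtain ⟨c, rfl⟩ : ∃ c, a = c + 1 := ⟨a - 1, by omega⟩
  have hab : (c + 1) * b = c * b + b := by ring
  have h := descFactorial_mul_choose_sub_comm ((c + 1) * b - 1) (b - 1) c
  rw [show (c + 1) * b - 1 - c = (c + 1) * b - (c + 1) by omega,
    show (c + 1) * b - 1 - (b - 1) = (c + 1) * b - b by omega] at h
  rw [Nat.add_sub_cancel, hab, choose_mul_add (by omega), ← hab, mul_assoc,
    mul_comm _ (descFactorial _ _), h]
  ring

theorem pow_mul_descFactorial_le_descFactorial {r : ℝ} (hr : 0 ≤ r) {x y k : ℕ}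
    (h : ∀ i < k, r * ((y - i : ℕ) : ℝ) ≤ ((x - i : ℕ) : ℝ)) :
    r ^ k * (y.descFactorial k : ℝ) ≤ x.descFactorial k := by
  rw [descFactorial_eq_prod_range, descFactorial_eq_prod_range, Nat.cast_prod, Nat.cast_prod,
    ← card_range k, ← prod_const, card_range, ← prod_mul_distrib]
  exact prod_le_prod (fun i _ => by positivity) fun i hi => h i (mem_range.mp hi)

theorem one_sub_one_div_sub_one_mul_le {a b i : ℕ} (hi : i + 2 ≤ a) (hb : 1 ≤ b) :
    (1 - 1 / ((a : ℝ) - 1)) * ((a * b - 1 - i : ℕ) : ℝ) ≤ (a * b - b - i : ℕ) := by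
  have hab : a + b ≤ a * b + 1 := by nlinarith
  have ha : (i : ℝ) + 2 ≤ a := by exact_mod_cast hi
  rw [Nat.cast_sub (by omega), Nat.cast_sub (by omega), Nat.cast_sub (by omega),
    Nat.cast_sub (by omega), one_sub_div (by linarith), div_mul_eq_mul_div,
    div_le_iff₀ (by linarith)]
  push_cast
  nlinarith

/-- For integers `a ≥ 2` and `b ≥ 1`,
`a·C(ab−a, b−1)/C(ab, b) ≥ (1 − 1/(a−1))^{a−1}`: the probability that, placing `b` balls
uniformly at random into `ab` positions, exactly one ball lands among the first `a`
positions, is at least `(1 − 1/(a−1))^{a−1}`. -/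
theorem balls_in_first_block_probability (a b : ℕ) (ha : 2 ≤ a) (hb : 1 ≤ b) :
    (1 - 1 / ((a : ℝ) - 1)) ^ (a - 1) ≤
      (a : ℝ) * ((a * b - a).choose (b - 1)) / ((a * b).choose b) := by
  have hidentity : (a : ℝ) * (a * b - a).choose (b - 1) * (a * b - 1).descFactorial (a - 1) =
      (a * b).choose b * (a * b - b).descFactorial (a - 1) := by
    exact_mod_cast mul_choose_mul_descFactorial_eq_choose_mul_descFactorial (by omega) hb
  have hchoose : (0 : ℝ) < (a * b).choose b := by
    exact_mod_cast choose_pos (by nlinarith)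
  have hdesc : (0 : ℝ) < (a * b - 1).descFactorial (a - 1) := by
    have : a ≤ a * b := Nat.le_mul_of_pos_right a hb
    exact_mod_cast Nat.pos_of_ne_zero fun h => by rw [descFactorial_eq_zero_iff_lt] at h; omega
  have hr : 0 ≤ 1 - 1 / ((a : ℝ) - 1) := by
    have : (2 : ℝ) ≤ a := by exact_mod_cast ha
    rw [sub_nonneg, div_le_one (by linarith)]
    linarith
  have hratio : (a : ℝ) * (a * b - a).choose (b - 1) / (a * b).choose b =
      (a * b - b).descFactorial (a - 1) / (a * b - 1).descFactorial (a - 1) := by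
    rw [div_eq_div_iff hchoose.ne' hdesc.ne', hidentity, mul_comm]
  rw [hratio, le_div_iff₀ hdesc]
  exact pow_mul_descFactorial_le_descFactorial hr fun i hi =>
    one_sub_one_div_sub_one_mul_le (by omega) hb
end

section
/- Let n, r be positive integers with r dividing n and r ≤ n, and let δ ≥ 0. There exists a (2r, δ, 2r²δ)-error-correcting data structure of length N = r · 2^{n/r} for the Substring problem with parameter r: the encoding is the concatenation of the Hadamard codes of the r consecutive (n/r)-bit blocks of x, and each query y with |y| ≤ r is answered with at most 2|y| ≤ 2r probes (two Hadamard-decoding probes per 1-bit of y) with error probability at most 2r²δ. -/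
/-- The substring `x_y`: the `|y|`-bit string consisting of the bits of `x` at the positions of
the 1-bits of `y`, in increasing order of position. -/
def substring' {n : ℕ} (x y : Fin n → Bool) : List Bool :=
  ((List.finRange n).filter (fun i => y i)).map x

namespace SubstringHadamard

open Finset Function

theorem runAns_eq_of_nonadaptive {N p : ℕ} {Q S : Type} (P : Fin p → Q → S → Fin N)
    (y : Fin N → Bool) (q : Q) (s : S) (k : Fin p) :
    runAns (fun k q s _ => P k q s) y q s k = y (P k q s) := by
  rw [runAns]

theorem card_le_card_filter_forall_eq_add_mul_hammingDist {S ι α β : Type*} [Fintype S]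
    [Fintype ι] [Fintype α] [DecidableEq β] (pos : ι → S → α) (hpos : ∀ i, Injective (pos i))
    (y c : α → β) :
    Fintype.card S ≤ #{s | ∀ i, y (pos i s) = c (pos i s)} + Fintype.card ι * hammingDist y c := by
  classical
  have hbad : #{s | ¬ ∀ i, y (pos i s) = c (pos i s)} ≤ Fintype.card ι * hammingDist y c := by
    calc #{s | ¬ ∀ i, y (pos i s) = c (pos i s)}
        ≤ #(univ.biUnion fun i => {s | y (pos i s) ≠ c (pos i s)}) := by
          gcongr
          intro s hs
          simpa using hs
      _ ≤ #(univ : Finset ι) * hammingDist y c := by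
          refine card_biUnion_le_card_mul _ _ _ fun i _ => ?_
          exact card_le_card_of_injOn (pos i) (fun s hs => by simpa using hs)
            (hpos i).injOn
  have := card_filter_add_card_filter_not (s := (univ : Finset S))
    (fun s => ∀ i, y (pos i s) = c (pos i s))
  rw [card_univ] at this
  omega

section Hadamard

variable {m : ℕ}

def hadamard (u z : Fin m → Bool) : Bool := decide (ip u z = 1)

def flipAt (t : Fin m) (z : Fin m → Bool) : Fin m → Bool := update z t (!z t)

theorem flipAt_involutive (t : Fin m) : Involutive (flipAt t) := by
  intro z
  ext i
  rcases eq_or_ne i t with rfl | hi <;> simp_all [flipAt]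

theorem ip_add_ip_flipAt (u z : Fin m → Bool) (t : Fin m) :
    ip u z + ip u (flipAt t z) = if u t then 1 else 0 := by
  unfold ip
  rw [← sum_add_distrib, sum_eq_single t]
  · simp only [flipAt, update_self]
    cases u t <;> cases z t <;> decide
  · intro i _ hi
    rw [flipAt, update_of_ne hi]
    cases u i && z i <;> decide
  · simp

theorem hadamard_xor_hadamard_flipAt (u z : Fin m → Bool) (t : Fin m) :
    xor (hadamard u z) (hadamard u (flipAt t z)) = u t := by
  have key := ip_add_ip_flipAt u z t
  unfold hadamard
  generalize ip u z = a, ip u (flipAt t z) = b, u t = c at key ⊢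
  revert a b c
  decide

end Hadamard

variable {n r m : ℕ}

/-- `i ↦ (i / m, i % m)`: `x` is cut into `r` consecutive blocks of length `m`. -/
def dataIndex (h : r * m = n) : Fin n ≃ Fin r × Fin m :=
  (finCongr h.symm).trans finProdFinEquiv.symm

noncomputable def seedIndex (m : ℕ) : (Fin m → Bool) ≃ Fin (2 ^ m) :=
  Fintype.equivFinOfCardEq (by simp)

noncomputable def codeIndex (r m : ℕ) : Fin r × (Fin m → Bool) ≃ Fin (r * 2 ^ m) :=
  ((Equiv.refl _).prodCongr (seedIndex m)).trans finProdFinEquiv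

def block (h : r * m = n) (x : Fin n → Bool) (b : Fin r) : Fin m → Bool :=
  fun t => x ((dataIndex h).symm (b, t))

noncomputable def encode (h : r * m = n) (x : Fin n → Bool) (p : Fin (r * 2 ^ m)) : Bool :=
  hadamard (block h x ((codeIndex r m).symm p).1) ((codeIndex r m).symm p).2

noncomputable def probeAt (h : r * m = n) (i : Fin n) (par : Bool) (z : Fin m → Bool) :
    Fin (r * 2 ^ m) :=
  codeIndex r m ((dataIndex h i).1, if par then flipAt (dataIndex h i).2 z else z)

theorem probeAt_injective (h : r * m = n) (i : Fin n) (par : Bool) :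
    Injective (probeAt h i par) := by
  intro z z' hz
  have := congrArg Prod.snd ((codeIndex r m).injective hz)
  cases par
  · simpa using this
  · simpa using (flipAt_involutive _).injective this

theorem xor_encode_probeAt (h : r * m = n) (x : Fin n → Bool) (i : Fin n)
    (z : Fin m → Bool) :
    xor (encode h x (probeAt h i false z)) (encode h x (probeAt h i true z)) = x i := by
  simp [encode, probeAt, hadamard_xor_hadamard_flipAt, block]

abbrev Query (n r : ℕ) : Type := {y : Fin n → Bool // wt y ≤ r}

def queryPositions (y : Fin n → Bool) : List (Fin n) := (List.finRange n).filter (fun i => y i)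

theorem length_queryPositions (y : Fin n → Bool) : (queryPositions y).length = wt y := by
  simp [queryPositions, wt, Fin.univ_def, Finset.filter, Multiset.filter_coe]

theorem length_queryPositions_le (q : Query n r) : (queryPositions q.1).length ≤ r :=
  (length_queryPositions q.1).trans_le q.2

/-- `k ↦ (k / 2, k % 2 = 1)`. -/
def probeIndex (r : ℕ) : Fin (2 * r) ≃ Fin r × Bool :=
  (finCongr (mul_comm 2 r)).trans
    (finProdFinEquiv.symm.trans ((Equiv.refl _).prodCongr finTwoEquiv))

noncomputable def probe (h : r * m = n) (k : Fin (2 * r)) (q : Query n r) (s : Fin (2 ^ m)) :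
    Fin (r * 2 ^ m) :=
  if hj : ((probeIndex r k).1 : ℕ) < (queryPositions q.1).length then
    probeAt h (queryPositions q.1)[((probeIndex r k).1 : ℕ)] (probeIndex r k).2
      ((seedIndex m).symm s)
  -- never read by `decode`
  else ⟨0, Nat.mul_pos (probeIndex r k).1.pos (Nat.two_pow_pos m)⟩

def decode (q : Query n r) (a : Fin (2 * r) → Bool) : List Bool :=
  List.ofFn fun j : Fin (queryPositions q.1).length =>
    let j' := Fin.castLE (length_queryPositions_le q) j
    xor (a ((probeIndex r).symm (j', false))) (a ((probeIndex r).symm (j', true)))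

theorem probe_probeIndex_symm (h : r * m = n) (q : Query n r) (s : Fin (2 ^ m))
    (j : Fin (queryPositions q.1).length) (par : Bool) :
    probe h ((probeIndex r).symm (Fin.castLE (length_queryPositions_le q) j, par)) q s =
      probeAt h (queryPositions q.1)[j] par ((seedIndex m).symm s) := by
  simp [probe]

theorem decode_runAns_eq_substring (h : r * m = n) (x : Fin n → Bool) (q : Query n r)
    (y : Fin (r * 2 ^ m) → Bool) (s : Fin (2 ^ m))
    (hs : ∀ (j : Fin (queryPositions q.1).length) (par : Bool),
      y (probeAt h (queryPositions q.1)[j] par ((seedIndex m).symm s)) =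
        encode h x (probeAt h (queryPositions q.1)[j] par ((seedIndex m).symm s))) :
    decode q (runAns (fun k q s _ => probe h k q s) y q s) = substring' x q.1 := by
  simp only [decode, runAns_eq_of_nonadaptive, probe_probeIndex_symm, hs,
    xor_encode_probeAt]
  exact List.ofFn_getElem_eq_map _ _

theorem le_card_filter_decode_eq_substring (h : r * m = n) (δ : ℝ) (q : Query n r) (x : Fin n → Bool)
    (y : Fin (r * 2 ^ m) → Bool) (hy : (hammingDist y (encode h x) : ℝ) ≤ δ * (r * 2 ^ m : ℕ)) :
    (1 - 2 * (r : ℝ) ^ 2 * δ) * (2 ^ m : ℕ) ≤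
      (#{s | decode q (runAns (fun k q s _ => probe h k q s) y q s) = substring' x q.1} : ℝ) := by
  set L := queryPositions q.1
  set d := hammingDist y (encode h x)
  set good := #{s | decode q (runAns (fun k q s _ => probe h k q s) y q s) = substring' x q.1}
  have hcount : 2 ^ m ≤ #{s : Fin (2 ^ m) | ∀ jp : Fin L.length × Bool,
      y (probeAt h L[jp.1] jp.2 ((seedIndex m).symm s)) =
        encode h x (probeAt h L[jp.1] jp.2 ((seedIndex m).symm s))} + L.length * 2 * d := by
    simpa using card_le_card_filter_forall_eq_add_mul_hammingDist
      (fun (jp : Fin L.length × Bool) s => probeAt h L[jp.1] jp.2 ((seedIndex m).symm s))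
      (fun jp => (probeAt_injective h L[jp.1] jp.2).comp (seedIndex m).symm.injective)
      y (encode h x)
  have hgood : 2 ^ m ≤ good + 2 * r * d := by
    refine hcount.trans (add_le_add (card_le_card <| monotone_filter_right _ fun s _ hs =>
      decode_runAns_eq_substring h x q y s fun j par => hs (j, par)) ?_)
    have : L.length ≤ r := length_queryPositions_le q
    exact Nat.mul_le_mul_right d (by omega)
  have hgood' : (2 : ℝ) ^ m ≤ good + 2 * r * d := by exact_mod_cast hgood
  push_cast at hy ⊢
  calc (1 - 2 * (r : ℝ) ^ 2 * δ) * 2 ^ m = 2 ^ m - 2 * r * (δ * (r * 2 ^ m)) := by ring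
    _ ≤ 2 ^ m - 2 * r * d := by gcongr
    _ ≤ good := by linarith

noncomputable def substringECDS (h : r * m = n) (δ : ℝ) :
    ECDS (Fin n → Bool) (Query n r) (List Bool) (2 * r) (r * 2 ^ m) δ (2 * (r : ℝ) ^ 2 * δ)
      (fun x q => substring' x q.val) where
  enc := encode h
  seeds := 2 ^ m
  seeds_pos := Nat.two_pow_pos m
  probe k q s _ := probe h k q s
  out q _ := decode q
  correct q x y hy := le_card_filter_decode_eq_substring h δ q x y hy

end SubstringHadamard

theorem substring_hadamard_ecds_exists_general (n r : ℕ)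
    (hdvd : r ∣ n) (δ : ℝ) :
    Nonempty (ECDS (Fin n → Bool) {y : Fin n → Bool // wt y ≤ r} (List Bool)
      (2 * r) (r * 2 ^ (n / r)) δ (2 * (r : ℝ) ^ 2 * δ)
      (fun x q => substring' x q.val)) :=
  ⟨SubstringHadamard.substringECDS (Nat.mul_div_cancel' hdvd) δ⟩

/-- For `r ∣ n` and `δ ≥ 0` there is a `(2r, δ, 2r²δ)`-error-correcting data
structure of length `N = r·2^{n/r}` for the Substring problem with parameter `r`
(concatenation of the Hadamard codes of the `r` consecutive `(n/r)`-bit blocks of `x`,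
answering each query `y` with at most `2|y| ≤ 2r` probes). -/
theorem substring_hadamard_ecds_exists (n r : ℕ) (hn : 0 < n) (hr : 0 < r) (hrn : r ≤ n)
    (hdvd : r ∣ n) (δ : ℝ) (hδ : 0 ≤ δ) :
    Nonempty (ECDS (Fin n → Bool) {y : Fin n → Bool // wt y ≤ r} (List Bool)
      (2 * r) (r * 2 ^ (n / r)) δ (2 * (r : ℝ) ^ 2 * δ)
      (fun x q => substring' x q.val)) :=
  substring_hadamard_ecds_exists_general n r hdvd δ
end
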